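/- arXiv:1911.10116 — 5 statements merged into one kernel-verified Lean document; each statement's English description precedes it below -/
import Mathlib

section
/- Let M and M′ be networks whose signal counts r_i and r′_i (from the equilibrium weight recursion) satisfy r_i → ∞ and r′_i → ∞ and have strictly ranked aggregative efficiency lim_{i→∞}(r_i/i) > lim_{i→∞}(r′_i/i), both limits existing. Fix σ > 0 and set v_i := v_σ(r_i) and v′_i := v_σ(r′_i). Then there exists T̄ ∈ ℕ such that for every T ≥ T̄ and every T-patient social welfare function — i.e. every summable sequence of nonnegative weights (γ_i)_{i≥1} together with γ_∞ ≥ 0 satisfying γ_i = 0 for all i < T and γ_i > 0 for all i ≥ T — the welfare of M strictly exceeds that of M′: Σ_{i=1}^∞ γ_i v_i + γ_∞ · lim_{i→∞} v_i > Σ_{i=1}^∞ γ_i v′_i + γ_∞ · lim_{i→∞} v′_i. -/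
open Matrix Finset Filter

/-- The equilibrium weight vectors of the sequential social-learning model. -/
noncomputable def eqW (Net : ℕ → Finset ℕ) (i : ℕ) : ℕ → ℝ :=
  Nat.strongRecOn i (fun n prev =>
    let nb := (Net n).filter (fun j => j < n)
    if nb.Nonempty then
      let What : Matrix {j // j ∈ nb} (Fin (n - 1)) ℝ :=
        Matrix.of (fun j m => prev j.1 (Finset.mem_filter.mp j.2).2 (m.1 + 1))
      let beta : {j // j ∈ nb} → ℝ :=
        Matrix.vecMul (fun j => ∑ m, What j m) ((What * What.transpose)⁻¹)
      fun m => (if m = n then (1 : ℝ) else 0) +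
        ∑ j : {j // j ∈ nb}, beta j * prev j.1 (Finset.mem_filter.mp j.2).2 m
    else fun m => if m = n then (1 : ℝ) else 0)

/-- The number of signals aggregated by agent `i`: `r_i = Σ_j W_i(j)`. -/
noncomputable def rcount (Net : ℕ → Finset ℕ) (i : ℕ) : ℝ :=
  ∑ j ∈ Finset.range (i + 1), eqW Net i j

open MeasureTheory ProbabilityTheory Real

/-- The expected equilibrium welfare of an agent aggregating `r` signals when the
private signal variance is `σ²`:
`v_σ(r) = −½ ∫ (eˣ/(1+eˣ) − 1)² dN(2r/σ², 4r/σ²)(x) − ½ ∫ (eˣ/(1+eˣ))² dN(−2r/σ², 4r/σ²)(x)`. -/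
noncomputable def welfare (σ r : ℝ) : ℝ :=
  -(1 / 2) * ∫ x, (Real.exp x / (1 + Real.exp x) - 1) ^ 2
      ∂(gaussianReal (2 * r / σ ^ 2) (Real.toNNReal (4 * r / σ ^ 2)))
  - (1 / 2) * ∫ x, (Real.exp x / (1 + Real.exp x)) ^ 2
      ∂(gaussianReal (-(2 * r / σ ^ 2)) (Real.toNNReal (4 * r / σ ^ 2)))


open MeasureTheory ProbabilityTheory

/-!
Agent `i`'s welfare is `-R(2 rᵢ / σ²)`, where `R(m) = E[S(X)]` (`bayesRisk`) with
`S(x) = (1 + eˣ)⁻²` (`sqErr`) is the expected squared error of the posterior when the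
log-likelihood ratio is `X ~ N(m, 2m)`. Writing `X = aZ + a²` with `Z ~ N(0, 2)` and `m = a²`,
`d/da E[S(X)] = E[S'(X)(Z + 2a)] = a⁻¹ E[S'(X)(X + a²)]`. The density of `N(m, 2m)` satisfies
`φ(-x) = e⁻ˣ φ(x)` and `S'(-x) e⁻ˣ = S'(x)`, so `E[X S'(X)] = 0` and the derivative is
`a E[S'(X)] < 0`. Hence the welfare is strictly increasing in `r`, and being bounded it has a
limit, so the two `γ∞`-terms coincide. Since `r'ᵢ < rᵢ` eventually, from some `T̄` on every
weighted term of `M` dominates that of `M'`, strictly at `i = T`.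
-/

open Topology Set
open scoped NNReal

namespace SocialLearning

noncomputable def sqErr (x : ℝ) : ℝ := ((1 + exp x) ^ 2)⁻¹

noncomputable def sqErr' (x : ℝ) : ℝ := -2 * exp x / (1 + exp x) ^ 3

@[fun_prop]
lemma continuous_sqErr : Continuous sqErr := by
  unfold sqErr
  fun_prop (disch := intro x; positivity)

@[fun_prop]
lemma continuous_sqErr' : Continuous sqErr' := by
  unfold sqErr'
  fun_prop (disch := intro x; positivity)

lemma sqErr_nonneg (x : ℝ) : 0 ≤ sqErr x := by
  unfold sqErr
  positivity

lemma sqErr_le_one (x : ℝ) : sqErr x ≤ 1 :=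
  inv_le_one_of_one_le₀ (one_le_pow₀ (by linarith [exp_pos x]))

lemma abs_sqErr_le_one (x : ℝ) : |sqErr x| ≤ 1 :=
  (abs_of_nonneg (sqErr_nonneg x)).trans_le (sqErr_le_one x)

lemma hasDerivAt_sqErr (x : ℝ) : HasDerivAt sqErr (sqErr' x) x := by
  have h := (((hasDerivAt_exp x).const_add 1).pow 2).inv
    (pow_ne_zero 2 (by positivity : (1 + exp x) ≠ 0))
  refine h.congr_deriv ?_
  simp only [sqErr', Pi.pow_apply]
  field_simp
  ring

lemma sqErr'_lt_zero (x : ℝ) : sqErr' x < 0 := by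
  unfold sqErr'
  have := exp_pos x
  exact div_neg_of_neg_of_pos (by linarith) (by positivity)

lemma abs_sqErr'_le (x : ℝ) : |sqErr' x| ≤ 2 := by
  have hx := exp_pos x
  have h1 : 1 ≤ 1 + exp x := by linarith
  rw [abs_of_neg (sqErr'_lt_zero x), sqErr', neg_mul, neg_div, neg_neg,
    div_le_iff₀ (by positivity)]
  nlinarith [one_le_pow₀ (n := 2) h1]

lemma sqErr'_neg_mul_exp_neg (x : ℝ) : sqErr' (-x) * exp (-x) = sqErr' x := by
  simp only [sqErr', exp_neg]
  field_simp
  ring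

lemma sq_logistic_sub_one (x : ℝ) : (exp x / (1 + exp x) - 1) ^ 2 = sqErr x := by
  have : 1 + exp x ≠ 0 := by positivity
  simp only [sqErr]
  field_simp
  ring

lemma sq_logistic_neg (x : ℝ) : (exp (-x) / (1 + exp (-x))) ^ 2 = sqErr x := by
  simp only [sqErr, exp_neg]
  field_simp
  ring

lemma gaussianPDFReal_neg (μ : ℝ) (v : ℝ≥0) (x : ℝ) :
    gaussianPDFReal μ v (-x) = exp (-(2 * μ * x / v)) * gaussianPDFReal μ v x := by
  rcases eq_or_ne v 0 with rfl | hv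
  · simp
  have hv : (v : ℝ) ≠ 0 := by exact_mod_cast hv
  simp only [gaussianPDFReal]
  rw [mul_left_comm (rexp _), ← exp_add]
  congr 2
  field_simp
  ring

lemma integral_gaussianReal_eq_integral_neg_mul_exp {μ : ℝ} {v : ℝ≥0} (hv : v ≠ 0)
    (f : ℝ → ℝ) :
    ∫ x, f x ∂gaussianReal μ v
      = ∫ x, f (-x) * exp (-(2 * μ * x / v)) ∂gaussianReal μ v := by
  rw [integral_gaussianReal_eq_integral_smul hv, integral_gaussianReal_eq_integral_smul hv,
    ← integral_neg_eq_self]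
  congr with x
  rw [gaussianPDFReal_neg, smul_eq_mul, smul_eq_mul]
  ring

lemma integral_mul_sqErr'_gaussianReal {m : ℝ} (hm : 0 < m) :
    ∫ x, x * sqErr' x ∂gaussianReal m (2 * m).toNNReal = 0 := by
  have hv : ((2 * m).toNNReal : ℝ) = 2 * m := Real.coe_toNNReal _ (by positivity)
  have hllr : ∀ x, 2 * m * x / (2 * m).toNNReal = x := fun x => by
    rw [hv]
    field_simp
  have h := integral_gaussianReal_eq_integral_neg_mul_exp (μ := m) (v := (2 * m).toNNReal)
    (by simpa using hm) (fun x => x * sqErr' x)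
  simp_rw [hllr, neg_mul, mul_assoc, sqErr'_neg_mul_exp_neg, integral_neg] at h
  linarith

lemma gaussianReal_map_mul_add_sq (a : ℝ) :
    (gaussianReal 0 2).map (fun z => a * z + a ^ 2)
      = gaussianReal (a ^ 2) (2 * a ^ 2).toNNReal := by
  rw [show (fun z => a * z + a ^ 2) = (· + a ^ 2) ∘ (a * ·) from rfl,
    ← Measure.map_map (by fun_prop) (by fun_prop), gaussianReal_map_const_mul,
    gaussianReal_map_add_const]
  congr 1
  · ring
  · ext
    simp [Real.coe_toNNReal _ (by positivity : 0 ≤ 2 * a ^ 2)]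
    ring

lemma integral_gaussianReal_comp_mul_add_sq {a : ℝ} (ha : a ≠ 0) (f : ℝ → ℝ) :
    ∫ z, f (a * z + a ^ 2) ∂gaussianReal 0 2
      = ∫ x, f x ∂gaussianReal (a ^ 2) (2 * a ^ 2).toNNReal := by
  rw [← gaussianReal_map_mul_add_sq]
  exact (((Homeomorph.mulLeft₀ a ha).trans
    (Homeomorph.addRight (a ^ 2))).measurableEmbedding.integral_map f).symm

lemma integrable_sqErr (μ : Measure ℝ) [IsFiniteMeasure μ] : Integrable sqErr μ :=
  .of_bound continuous_sqErr.aestronglyMeasurable 1 (ae_of_all _ abs_sqErr_le_one)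

lemma integrable_sqErr' (μ : Measure ℝ) [IsFiniteMeasure μ] : Integrable sqErr' μ :=
  .of_bound continuous_sqErr'.aestronglyMeasurable 2 (ae_of_all _ abs_sqErr'_le)

lemma integral_sqErr'_lt_zero (μ : Measure ℝ) [IsProbabilityMeasure μ] :
    ∫ x, sqErr' x ∂μ < 0 := by
  have hpos : 0 < ∫ x, -sqErr' x ∂μ := by
    rw [integral_pos_iff_support_of_nonneg (fun x => (neg_pos.2 (sqErr'_lt_zero x)).le)
      (integrable_sqErr' μ).neg,
      Function.support_eq_univ fun x => (neg_pos.2 (sqErr'_lt_zero x)).ne']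
    simp
  rwa [integral_neg, neg_pos] at hpos

noncomputable def bayesRisk (m : ℝ) : ℝ := ∫ x, sqErr x ∂gaussianReal m (2 * m).toNNReal

lemma bayesRisk_nonneg (m : ℝ) : 0 ≤ bayesRisk m :=
  integral_nonneg sqErr_nonneg

lemma bayesRisk_le_one (m : ℝ) : bayesRisk m ≤ 1 := by
  refine (integral_mono (integrable_sqErr _) (integrable_const 1) sqErr_le_one).trans_eq ?_
  simp

lemma welfare_eq_neg_bayesRisk (σ r : ℝ) : welfare σ r = -bayesRisk (2 * r / σ ^ 2) := by
  have hv : (4 * r / σ ^ 2).toNNReal = (2 * (2 * r / σ ^ 2)).toNNReal := by ring_nf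
  have hneg : MeasurableEmbedding (fun x : ℝ => -x) := (Homeomorph.neg ℝ).measurableEmbedding
  rw [welfare, bayesRisk, hv, ← gaussianReal_map_neg, hneg.integral_map]
  simp_rw [sq_logistic_sub_one, sq_logistic_neg]
  ring

lemma hasDerivAt_integral_sqErr_mul_add_sq (a₀ : ℝ) :
    HasDerivAt (fun a => ∫ z, sqErr (a * z + a ^ 2) ∂gaussianReal 0 2)
      (∫ z, sqErr' (a₀ * z + a₀ ^ 2) * (z + 2 * a₀) ∂gaussianReal 0 2) a₀ := by
  have habs : Integrable (fun z : ℝ => |z|) (gaussianReal 0 2) :=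
    ((memLp_id_gaussianReal 1).integrable le_rfl).abs
  refine (hasDerivAt_integral_of_dominated_loc_of_deriv_le (μ := gaussianReal 0 2)
    (F' := fun a z => sqErr' (a * z + a ^ 2) * (z + 2 * a))
    (bound := fun z => 2 * |z| + 4 * (|a₀| + 1)) (Metric.ball_mem_nhds a₀ one_pos)
    ?_ ?_ ?_ ?_ ((habs.const_mul 2).add (integrable_const _)) ?_).2
  · exact .of_forall fun a => (by fun_prop : Continuous _).aestronglyMeasurable
  · exact .of_bound (by fun_prop : Continuous _).aestronglyMeasurable 1
      (ae_of_all _ fun z => abs_sqErr_le_one _)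
  · exact (by fun_prop : Continuous _).aestronglyMeasurable
  · refine ae_of_all _ fun z a ha => ?_
    have ha : |a| ≤ |a₀| + 1 := by
      have := abs_sub_abs_le_abs_sub a a₀
      have : |a - a₀| < 1 := by simpa [Real.dist_eq] using ha
      linarith
    rw [Real.norm_eq_abs, abs_mul]
    calc |sqErr' (a * z + a ^ 2)| * |z + 2 * a| ≤ 2 * (|z| + 2 * |a|) := by
          gcongr
          · exact abs_sqErr'_le _
          · exact (abs_add_le _ _).trans_eq (by simp [abs_mul])
      _ ≤ 2 * |z| + 4 * (|a₀| + 1) := by linarith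
  · refine ae_of_all _ fun z a _ => ?_
    have hinner : HasDerivAt (fun a => a * z + a ^ 2) (z + 2 * a) a := by
      simpa using (hasDerivAt_mul_const z).fun_add (hasDerivAt_pow 2 a)
    exact (hasDerivAt_sqErr _).comp a hinner

lemma mul_integral_sqErr'_mul_add_sq {a : ℝ} (ha : a ≠ 0) :
    a * ∫ z, sqErr' (a * z + a ^ 2) * (z + 2 * a) ∂gaussianReal 0 2
      = a ^ 2 * ∫ x, sqErr' x ∂gaussianReal (a ^ 2) (2 * a ^ 2).toNNReal := by
  set μ := gaussianReal (a ^ 2) (2 * a ^ 2).toNNReal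
  have hx : Integrable (fun x => x * sqErr' x) μ :=
    .mono' (((memLp_id_gaussianReal 1).integrable le_rfl).abs.const_mul 2)
      (continuous_id.mul continuous_sqErr').aestronglyMeasurable
      (ae_of_all _ fun x => by
        rw [Real.norm_eq_abs, abs_mul, mul_comm]
        exact mul_le_mul_of_nonneg_right (abs_sqErr'_le x) (abs_nonneg x))
  calc a * ∫ z, sqErr' (a * z + a ^ 2) * (z + 2 * a) ∂gaussianReal 0 2
      = ∫ z, (fun x => x * sqErr' x + a ^ 2 * sqErr' x) (a * z + a ^ 2) ∂gaussianReal 0 2 := by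
        rw [← integral_const_mul]
        congr with z
        ring
    _ = ∫ x, x * sqErr' x + a ^ 2 * sqErr' x ∂μ :=
        integral_gaussianReal_comp_mul_add_sq ha fun x => x * sqErr' x + a ^ 2 * sqErr' x
    _ = ∫ x, x * sqErr' x ∂μ + a ^ 2 * ∫ x, sqErr' x ∂μ := by
        rw [integral_add hx
          ((integrable_sqErr' μ).const_mul _), integral_const_mul]
    _ = a ^ 2 * ∫ x, sqErr' x ∂μ := by
        rw [integral_mul_sqErr'_gaussianReal (by positivity), zero_add]

lemma strictAntiOn_integral_sqErr_mul_add_sq :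
    StrictAntiOn (fun a => ∫ z, sqErr (a * z + a ^ 2) ∂gaussianReal 0 2) (Ioi 0) := by
  refine strictAntiOn_of_deriv_neg (convex_Ioi 0)
    (fun a _ => (hasDerivAt_integral_sqErr_mul_add_sq a).continuousAt.continuousWithinAt)
    fun a ha => ?_
  rw [interior_Ioi, Set.mem_Ioi] at ha
  rw [(hasDerivAt_integral_sqErr_mul_add_sq a).deriv]
  refine neg_of_mul_neg_right ?_ ha.le
  rw [mul_integral_sqErr'_mul_add_sq ha.ne']
  exact mul_neg_of_pos_of_neg (by positivity) (integral_sqErr'_lt_zero _)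

lemma bayesRisk_strictAntiOn : StrictAntiOn bayesRisk (Ioi 0) := by
  have hsq : ∀ a : ℝ, 0 < a →
      bayesRisk (a ^ 2) = ∫ z, sqErr (a * z + a ^ 2) ∂gaussianReal 0 2 :=
    fun a ha => (integral_gaussianReal_comp_mul_add_sq ha.ne' sqErr).symm
  intro m hm n hn hmn
  have hm' : 0 < √m := sqrt_pos.2 hm
  have hlt : √m < √n := sqrt_lt_sqrt hm.le hmn
  rw [← sq_sqrt hm.le, ← sq_sqrt (le_of_lt hn), hsq _ hm', hsq _ (hm'.trans hlt)]
  exact strictAntiOn_integral_sqErr_mul_add_sq hm' (hm'.trans hlt) hlt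

lemma welfare_strictMonoOn {σ : ℝ} (hσ : σ ≠ 0) : StrictMonoOn (welfare σ) (Ioi 0) := by
  intro r hr s hs hrs
  simp only [welfare_eq_neg_bayesRisk, neg_lt_neg_iff]
  have hσ2 : 0 < σ ^ 2 := by positivity
  exact bayesRisk_strictAntiOn (div_pos (by linarith [Set.mem_Ioi.1 hr]) hσ2)
    (div_pos (by linarith [Set.mem_Ioi.1 hs]) hσ2) (div_lt_div_of_pos_right (by linarith) hσ2)

lemma welfare_nonpos (σ r : ℝ) : welfare σ r ≤ 0 := by
  rw [welfare_eq_neg_bayesRisk, neg_nonpos]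
  exact bayesRisk_nonneg _

lemma abs_welfare_le_one (σ r : ℝ) : |welfare σ r| ≤ 1 := by
  rw [welfare_eq_neg_bayesRisk, abs_neg, abs_of_nonneg (bayesRisk_nonneg _)]
  exact bayesRisk_le_one _

lemma exists_tendsto_welfare_atTop {σ : ℝ} (hσ : σ ≠ 0) :
    ∃ ℓ, Tendsto (welfare σ) atTop (𝓝 ℓ) := by
  have hmono : Monotone fun r => welfare σ (max r 1) := fun r s hrs =>
    (welfare_strictMonoOn hσ).monotoneOn (Set.mem_Ioi.2 (lt_max_of_lt_right one_pos))
      (Set.mem_Ioi.2 (lt_max_of_lt_right one_pos)) (max_le_max_right 1 hrs)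
  refine ⟨_, (tendsto_atTop_ciSup hmono ⟨0, ?_⟩).congr' ?_⟩
  · rintro _ ⟨r, rfl⟩
    exact welfare_nonpos σ _
  · filter_upwards [eventually_ge_atTop 1] with r hr
    rw [max_eq_left hr]

end SocialLearning

lemma eventually_lt_of_tendsto_div_natCast {u v : ℕ → ℝ} {L L' : ℝ}
    (hu : Tendsto (fun i : ℕ => u i / i) atTop (𝓝 L))
    (hv : Tendsto (fun i : ℕ => v i / i) atTop (𝓝 L')) (hLL' : L' < L) :
    ∀ᶠ i in atTop, v i < u i := by
  filter_upwards [hv.eventually_lt hu hLL', eventually_gt_atTop 0] with i hlt hi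
  exact (div_lt_div_iff_of_pos_right (by exact_mod_cast hi)).1 hlt

lemma tsum_mul_lt_tsum_mul {γ f g : ℕ → ℝ} {C : ℝ} (hγ : ∀ i, 0 ≤ γ i)
    (hγs : Summable γ) (hf : ∀ i, |f i| ≤ C) (hg : ∀ i, |g i| ≤ C) (hfg : ∀ i, 0 < γ i → f i < g i)
    {k : ℕ} (hk : 0 < γ k) :
    ∑' i, γ i * f i < ∑' i, γ i * g i := by
  have hsummable : ∀ h : ℕ → ℝ, (∀ i, |h i| ≤ C) → Summable fun i => γ i * h i :=
    fun h hh => (hγs.mul_right C).of_norm_bounded fun i => by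
      rw [Real.norm_eq_abs, abs_mul, abs_of_nonneg (hγ i)]
      exact mul_le_mul_of_nonneg_left (hh i) (hγ i)
  refine Summable.tsum_lt_tsum (i := k) (fun i => ?_) (mul_lt_mul_of_pos_left (hfg k hk) hk)
    (hsummable f hf) (hsummable g hg)
  rcases (hγ i).eq_or_lt with h0 | hpos
  · simp [← h0]
  · exact mul_le_mul_of_nonneg_left (hfg i hpos).le hpos.le

open SocialLearning

theorem patient_planner_prefers_efficient_general
    (Net Net' : ℕ → Finset ℕ)
    (hr : Tendsto (fun i : ℕ => rcount Net i) atTop atTop)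
    (hr' : Tendsto (fun i : ℕ => rcount Net' i) atTop atTop)
    (L L' : ℝ)
    (hL : Tendsto (fun i : ℕ => rcount Net i / (i : ℝ)) atTop (nhds L))
    (hL' : Tendsto (fun i : ℕ => rcount Net' i / (i : ℝ)) atTop (nhds L'))
    (hrank : L' < L) (σ : ℝ) (hσ : 0 < σ) :
    ∃ Tbar : ℕ, ∀ T : ℕ, Tbar ≤ T →
      ∀ γ : ℕ → ℝ, ∀ γinf : ℝ,
        (∀ i, 0 ≤ γ i) → Summable γ →
        (∀ i, i < T → γ i = 0) → (∀ i, T ≤ i → 0 < γ i) → 0 ≤ γinf →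
        (∑' i : ℕ, γ i * welfare σ (rcount Net' i))
            + γinf * (limUnder atTop (fun i : ℕ => welfare σ (rcount Net' i)))
          < (∑' i : ℕ, γ i * welfare σ (rcount Net i))
            + γinf * (limUnder atTop (fun i : ℕ => welfare σ (rcount Net i))) := by
  obtain ⟨ℓ, hℓ⟩ := exists_tendsto_welfare_atTop hσ.ne'
  have hdom : ∀ᶠ i in atTop, welfare σ (rcount Net' i) < welfare σ (rcount Net i) := by
    filter_upwards [hr'.eventually_gt_atTop 0, eventually_lt_of_tendsto_div_natCast hL hL' hrank]
      with i hpos hlt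
    exact welfare_strictMonoOn hσ.ne' hpos (hpos.trans hlt) hlt
  obtain ⟨Tbar, hTbar⟩ := eventually_atTop.1 hdom
  refine ⟨Tbar, fun T hT γ γinf hγ hγs hγzero hγpos _ => ?_⟩
  have hlim : ∀ u : ℕ → ℝ, Tendsto u atTop atTop →
      limUnder atTop (fun i => welfare σ (u i)) = ℓ :=
    fun u hu => (hℓ.comp hu).limUnder_eq
  rw [hlim _ hr, hlim _ hr']
  refine add_lt_add_left (tsum_mul_lt_tsum_mul hγ hγs (fun i => abs_welfare_le_one σ _)
    (fun i => abs_welfare_le_one σ _) (fun i hi => hTbar i (hT.trans ?_)) (hγpos T le_rfl)) _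
  by_contra! hiT
  exact hi.ne' (hγzero i hiT)

/-- Let `M` and `M′` be networks with `r_i → ∞`, `r′_i → ∞` and
strictly ranked aggregative efficiency `lim r_i/i > lim r′_i/i`. Fix `σ > 0`. Then
there is `T̄` such that for every `T ≥ T̄`, every `T`-patient social welfare
function (summable nonnegative weights `γ` vanishing before `T` and strictly
positive from `T` on, plus a weight `γ∞ ≥ 0` on the limit) strictly prefers `M`
to `M′`. -/
theorem patient_planner_prefers_efficient
    (Net Net' : ℕ → Finset ℕ)
    (hNet : ∀ i, ∀ j ∈ Net i, 1 ≤ j ∧ j < i)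
    (hNet' : ∀ i, ∀ j ∈ Net' i, 1 ≤ j ∧ j < i)
    (hr : Tendsto (fun i : ℕ => rcount Net i) atTop atTop)
    (hr' : Tendsto (fun i : ℕ => rcount Net' i) atTop atTop)
    (L L' : ℝ)
    (hL : Tendsto (fun i : ℕ => rcount Net i / (i : ℝ)) atTop (nhds L))
    (hL' : Tendsto (fun i : ℕ => rcount Net' i / (i : ℝ)) atTop (nhds L'))
    (hrank : L' < L) (σ : ℝ) (hσ : 0 < σ) :
    ∃ Tbar : ℕ, ∀ T : ℕ, Tbar ≤ T →
      ∀ γ : ℕ → ℝ, ∀ γinf : ℝ,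
        (∀ i, 0 ≤ γ i) → Summable γ →
        (∀ i, i < T → γ i = 0) → (∀ i, T ≤ i → 0 < γ i) → 0 ≤ γinf →
        (∑' i : ℕ, γ i * welfare σ (rcount Net' i))
            + γinf * (limUnder atTop (fun i : ℕ => welfare σ (rcount Net' i)))
          < (∑' i : ℕ, γ i * welfare σ (rcount Net i))
            + γinf * (limUnder atTop (fun i : ℕ => welfare σ (rcount Net i))) :=
  patient_planner_prefers_efficient_general Net Net' hr hr' L L' hL hL' hrank σ hσ
end

section
/- Consider a generations network with generation size K ≥ 2 associated to symmetric observation sets with parameters (d, c) where d ≥ 2, and let W_i and β_i be given by the equilibrium weight recursion. Then for every generation t: (i) the quantity Σ_j W_i(j)² is the same for all agents i in generation t; (ii) the quantity Σ_j W_i(j)·W_{i′}(j) is the same for all pairs of distinct agents i ≠ i′ in generation t; and (iii) for t ≥ 2, all d components of the weight vector β_i are equal to one another, and their common value is the same for all agents i in generation t (denote it β_t). -/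
open Matrix Finset Filter

/-- The generations network with generation size `K` and observation sets `Ψ`:
`N(i) = ∅` for `1 ≤ i ≤ K`, and `N((t−1)K+k) = {(t−2)K+ψ : ψ ∈ Ψ_k}` for `t ≥ 2`,
`1 ≤ k ≤ K`. -/
def genNet (K : ℕ) (Ψ : ℕ → Finset ℕ) : ℕ → Finset ℕ := fun i =>
  if i ≤ K then ∅
  else (Ψ ((i - 1) % K + 1)).image (fun ψ => ((i - 1) / K - 1) * K + ψ)

/-- The (filtered) neighborhood used in the equilibrium weight recursion. -/
def nbr (Net : ℕ → Finset ℕ) (i : ℕ) : Finset ℕ := (Net i).filter (fun j => j < i)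

/-- The matrix `Ŵ` of agent `i`'s neighbors' weight vectors restricted to
coordinates `1,…,i−1`. -/
noncomputable def hatW (Net : ℕ → Finset ℕ) (i : ℕ) :
    Matrix {j // j ∈ nbr Net i} (Fin (i - 1)) ℝ :=
  Matrix.of (fun j m => eqW Net j.1 (m.1 + 1))

/-- The equilibrium weight vector `β_i = 𝟙ᵀ Ŵᵀ (ŴŴᵀ)⁻¹` of agent `i` on her
neighbors' log-actions. -/
noncomputable def eqBeta (Net : ℕ → Finset ℕ) (i : ℕ) : {j // j ∈ nbr Net i} → ℝ :=
  Matrix.vecMul (fun j => ∑ m, hatW Net i j m)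
    ((hatW Net i * (hatW Net i).transpose)⁻¹)

/-!
Induction over generations. Within a generation all weight vectors have the same squared norm
`V`, the same pairwise inner product `C` and the same coordinate sum `r`, and they vanish beyond
the generation. An agent of the next generation therefore sees `ŴŴᵀ = (V - C) I + C 𝟙𝟙ᵀ` and
`Ŵ 𝟙 = r 𝟙`; since `𝟙` is an eigenvector of `ŴŴᵀ`, `β = r / (V + (d - 1) C) · 𝟙`. Thus
`W_i = e_i + β Σ_{ψ ∈ Ψ_k} W_ψ`, and `|Ψ_k| = d`, `|Ψ_k ∩ Ψ_k'| = c` make the new norms, inner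
products and sums again independent of the agent. The gap `V - C ≥ 1`, propagated using
`c ≤ d`, keeps `ŴŴᵀ` invertible.
-/

theorem sum_fin_eq_sum_range_succ {M : Type*} [AddCommMonoid M] (F : ℕ → M) (h : F 0 = 0)
    (n : ℕ) : ∑ m : Fin n, F (m + 1) = ∑ m ∈ range (n + 1), F m := by
  rw [Fin.sum_univ_eq_sum_range (fun m => F (m + 1)), sum_range_succ', h, add_zero]

theorem sum_range_eq_of_le {M : Type*} [AddCommMonoid M] {F : ℕ → M} {N n : ℕ}
    (hF : ∀ m, N ≤ m → F m = 0) (hN : N ≤ n) : ∑ m ∈ range n, F m = ∑ m ∈ range N, F m :=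
  (sum_subset (range_subset_range.2 hN) fun m _ hm => hF m (by simpa using hm)).symm

theorem sum_ite_add_mul_ite_add {α R : Type*} [DecidableEq α] [CommSemiring R] {s : Finset α}
    {a b : α} (ha : a ∈ s) {f g : α → R} (hf : f b = 0) (hg : g a = 0) :
    ∑ m ∈ s, ((if m = a then 1 else 0) + f m) * ((if m = b then 1 else 0) + g m)
      = (if a = b then 1 else 0) + ∑ m ∈ s, f m * g m := by
  simp only [add_mul, mul_add, sum_add_distrib, ite_mul, mul_ite, one_mul, zero_mul, mul_one,
    mul_zero, sum_ite_eq', if_pos ha, hf, hg, add_zero, zero_add]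
  by_cases hab : a = b
  · simp [← hab, ha]
  · simp [hab, Ne.symm hab]

theorem sum_sum_mul_sum_of_gram {α ι R : Type*} [DecidableEq ι] [CommRing R] {s : Finset α}
    {A B : Finset ι} {w : ι → α → R} {V C : R}
    (hw : ∀ a ∈ A, ∀ b ∈ B, ∑ m ∈ s, w a m * w b m = if a = b then V else C) :
    ∑ m ∈ s, (∑ a ∈ A, w a m) * (∑ b ∈ B, w b m) = #(A ∩ B) * (V - C) + #A * #B * C := by
  calc ∑ m ∈ s, (∑ a ∈ A, w a m) * (∑ b ∈ B, w b m)
      = ∑ a ∈ A, ∑ b ∈ B, ∑ m ∈ s, w a m * w b m := by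
        simp_rw [sum_mul_sum]; rw [sum_comm]; exact sum_congr rfl fun _ _ => sum_comm
    _ = ∑ a ∈ A, ∑ b ∈ B, (C + if a = b then V - C else 0) := by
        refine sum_congr rfl fun a ha => sum_congr rfl fun b hb => ?_
        rw [hw a ha b hb]; split_ifs <;> ring
    _ = _ := by
        simp only [sum_add_distrib, sum_const, sum_ite_eq, ← sum_filter, filter_mem_eq_inter,
          nsmul_eq_mul]
        ring

namespace Matrix

variable {ι 𝕜 : Type*} [Fintype ι] [DecidableEq ι] [Field 𝕜] {α γ : 𝕜}

theorem vecMul_of_ite_apply (v : ι → 𝕜) (j : ι) :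
    (v ᵥ* of fun i j : ι => if i = j then α else γ) j = γ * ∑ i, v i + (α - γ) * v j := by
  have hsplit : ∀ i, (if i = j then α else γ) = γ + if i = j then α - γ else 0 := fun i => by
    split_ifs <;> ring
  simp only [vecMul, dotProduct, of_apply, hsplit, mul_add, sum_add_distrib, ← sum_mul,
    mul_ite, mul_zero, sum_ite_eq']
  simp only [mem_univ, if_true]
  ring

theorem isUnit_det_of_ite (h₁ : α - γ ≠ 0) (h₂ : α + (Fintype.card ι - 1) * γ ≠ 0) :
    IsUnit (of fun i j : ι => if i = j then α else γ).det := by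
  refine isUnit_iff_ne_zero.2 fun hdet => ?_
  obtain ⟨v, hv, hvM⟩ := exists_vecMul_eq_zero_iff.2 hdet
  have hcoord : ∀ j, γ * ∑ i, v i + (α - γ) * v j = 0 := fun j => by
    rw [← vecMul_of_ite_apply, hvM, Pi.zero_apply]
  have hsum : ∑ i, v i = 0 := by
    have := sum_congr rfl fun j (_ : j ∈ univ) => hcoord j
    rw [sum_add_distrib, sum_const, ← mul_sum, card_univ, nsmul_eq_mul, sum_const_zero] at this
    exact (mul_eq_zero.1 (by linear_combination this)).resolve_left h₂
  refine hv (funext fun j => ?_)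
  simpa [hsum, h₁] using hcoord j

theorem const_vecMul_inv_of_ite (h₁ : α - γ ≠ 0) (h₂ : α + (Fintype.card ι - 1) * γ ≠ 0)
    (r : 𝕜) : (fun _ => r) ᵥ* (of fun i j : ι => if i = j then α else γ)⁻¹
      = fun _ => r / (α + (Fintype.card ι - 1) * γ) := by
  set M : Matrix ι ι 𝕜 := of fun i j => if i = j then α else γ
  have hconst : (fun _ => r / (α + (Fintype.card ι - 1) * γ)) ᵥ* M = fun _ => r := by
    ext j
    rw [vecMul_of_ite_apply, sum_const, card_univ, nsmul_eq_mul]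
    conv_rhs => rw [← div_mul_cancel₀ r h₂]
    ring
  rw [← hconst, vecMul_vecMul, mul_nonsing_inv _ (isUnit_det_of_ite h₁ h₂), vecMul_one]

end Matrix

theorem eqW_apply (Net : ℕ → Finset ℕ) (i m : ℕ) :
    eqW Net i m = (if m = i then 1 else 0)
      + ∑ j : {j // j ∈ nbr Net i}, eqBeta Net i j * eqW Net j m := by
  have hunfold : eqW Net i = if (nbr Net i).Nonempty then
      fun m => (if m = i then 1 else 0) + ∑ j : {j // j ∈ nbr Net i}, eqBeta Net i j * eqW Net j m
    else fun m => if m = i then 1 else 0 := by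
    rw [eqW, Nat.strongRecOn_eq]
    rfl
  by_cases hne : (nbr Net i).Nonempty
  · rw [hunfold, if_pos hne]
  · have : IsEmpty {j // j ∈ nbr Net i} := ⟨fun j => hne ⟨j, j.2⟩⟩
    simp [hunfold, hne]

theorem eqW_of_nbr_eq_empty {Net : ℕ → Finset ℕ} {i : ℕ} (h : nbr Net i = ∅) (m : ℕ) :
    eqW Net i m = if m = i then 1 else 0 := by
  have : IsEmpty {j // j ∈ nbr Net i} := ⟨fun j => by simpa [h] using j.2⟩
  simp [eqW_apply Net i m]

theorem sum_hatW_mul_hatW {Net : ℕ → Finset ℕ} {i : ℕ} (j j' : {j // j ∈ nbr Net i})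
    (h : eqW Net j 0 = 0) :
    ∑ m, hatW Net i j m * hatW Net i j' m = ∑ m ∈ range i, eqW Net j m * eqW Net j' m := by
  have hi : i - 1 + 1 = i := by have := (mem_filter.1 j.2).2; omega
  simpa [hatW, hi] using sum_fin_eq_sum_range_succ (fun m => eqW Net j m * eqW Net j' m)
    (by simp [h]) (i - 1)

theorem sum_hatW {Net : ℕ → Finset ℕ} {i : ℕ} (j : {j // j ∈ nbr Net i}) (h : eqW Net j 0 = 0) :
    ∑ m, hatW Net i j m = ∑ m ∈ range i, eqW Net j m := by
  have hi : i - 1 + 1 = i := by have := (mem_filter.1 j.2).2; omega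
  simpa [hatW, hi] using sum_fin_eq_sum_range_succ (eqW Net j) h (i - 1)

theorem eqBeta_eq_of_hatW {Net : ℕ → Finset ℕ} {i : ℕ} {V C r : ℝ} (h₁ : V - C ≠ 0)
    (h₂ : V + (#(nbr Net i) - 1) * C ≠ 0)
    (hgram : hatW Net i * (hatW Net i)ᵀ = of fun j j' => if j = j' then V else C)
    (hsum : ∀ j, ∑ m, hatW Net i j m = r) (x : {j // j ∈ nbr Net i}) :
    eqBeta Net i x = r / (V + (#(nbr Net i) - 1) * C) := by
  rw [← Fintype.card_coe] at h₂ ⊢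
  rw [eqBeta, funext hsum, hgram, const_vecMul_inv_of_ite h₁ h₂]

theorem nbr_genNet_of_le {K i : ℕ} (Ψ : ℕ → Finset ℕ) (hi : i ≤ K) : nbr (genNet K Ψ) i = ∅ := by
  simp [nbr, genNet, hi]

theorem nbr_genNet_succ_mul_add {K k : ℕ} {Ψ : ℕ → Finset ℕ} (q : ℕ) (hk : k ∈ Icc 1 K)
    (hΨ : Ψ k ⊆ Icc 1 K) :
    nbr (genNet K Ψ) ((q + 1) * K + k) = (Ψ k).image (q * K + ·) := by
  obtain ⟨hk₁, hk₂⟩ := mem_Icc.1 hk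
  have hmod : ((q + 1) * K + k - 1) % K + 1 = k := by
    rw [show (q + 1) * K + k - 1 = k - 1 + K * (q + 1) by rw [mul_comm]; omega,
      Nat.add_mul_mod_self_left, Nat.mod_eq_of_lt (by omega)]
    omega
  have hdiv : ((q + 1) * K + k - 1) / K - 1 = q := by
    rw [show (q + 1) * K + k - 1 = k - 1 + K * (q + 1) by rw [mul_comm]; omega,
      Nat.add_mul_div_left _ _ (by omega), Nat.div_eq_of_lt (by omega)]
    omega
  have hgt : ¬(q + 1) * K + k ≤ K := by nlinarith
  rw [nbr, genNet]
  simp only [if_neg hgt, hmod, hdiv]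
  refine filter_true_of_mem fun j hj => ?_
  obtain ⟨ψ, hψ, rfl⟩ := mem_image.1 hj
  have := mem_Icc.1 (hΨ hψ)
  nlinarith

/-- Generation `q + 1` consists of the agents `q * K + ψ`, `1 ≤ ψ ≤ K`. -/
structure IsSymmetricGeneration (K : ℕ) (Ψ : ℕ → Finset ℕ) (q : ℕ) (V C r : ℝ) : Prop where
  eqW_eq_zero : ∀ ψ ∈ Icc 1 K, ∀ m ∉ Icc 1 ((q + 1) * K), eqW (genNet K Ψ) (q * K + ψ) m = 0
  gram : ∀ ψ₁ ∈ Icc 1 K, ∀ ψ₂ ∈ Icc 1 K, ∑ m ∈ range ((q + 1) * K + 1),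
    eqW (genNet K Ψ) (q * K + ψ₁) m * eqW (genNet K Ψ) (q * K + ψ₂) m
      = if ψ₁ = ψ₂ then V else C
  sum_eqW : ∀ ψ ∈ Icc 1 K, ∑ m ∈ range ((q + 1) * K + 1), eqW (genNet K Ψ) (q * K + ψ) m = r
  one_le_sub : 1 ≤ V - C
  nonneg : 0 ≤ C

theorem isSymmetricGeneration_zero (K : ℕ) (Ψ : ℕ → Finset ℕ) :
    IsSymmetricGeneration K Ψ 0 1 0 1 := by
  have hW : ∀ ψ ∈ Icc 1 K, ∀ m, eqW (genNet K Ψ) ψ m = if m = ψ then 1 else 0 :=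
    fun ψ hψ => eqW_of_nbr_eq_empty (nbr_genNet_of_le Ψ (mem_Icc.1 hψ).2)
  refine ⟨fun ψ hψ m hm => ?_, fun ψ₁ hψ₁ ψ₂ hψ₂ => ?_, fun ψ hψ => ?_, by norm_num, le_rfl⟩
    <;> simp only [zero_mul, zero_add, one_mul]
  · rw [hW ψ hψ, if_neg (by rintro rfl; exact hm (by simpa using hψ))]
  · have := mem_Icc.1 hψ₁
    simp only [hW ψ₁ hψ₁, hW ψ₂ hψ₂, ite_mul, one_mul, zero_mul, sum_ite_eq', mem_range]
    split_ifs <;> first | rfl | omega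
  · have := mem_Icc.1 hψ
    simp only [hW ψ hψ, sum_ite_eq', mem_range]
    split_ifs <;> first | rfl | omega

namespace IsSymmetricGeneration

variable {K : ℕ} {Ψ : ℕ → Finset ℕ} {q : ℕ} {V C r : ℝ}

theorem gram_of_le (h : IsSymmetricGeneration K Ψ q V C r) {ψ₁ ψ₂ : ℕ} (hψ₁ : ψ₁ ∈ Icc 1 K)
    (hψ₂ : ψ₂ ∈ Icc 1 K) {n : ℕ} (hn : (q + 1) * K < n) :
    ∑ m ∈ range n, eqW (genNet K Ψ) (q * K + ψ₁) m * eqW (genNet K Ψ) (q * K + ψ₂) m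
      = if ψ₁ = ψ₂ then V else C := by
  rw [sum_range_eq_of_le (N := (q + 1) * K + 1) (fun m hm => ?_) hn, h.gram ψ₁ hψ₁ ψ₂ hψ₂]
  rw [h.eqW_eq_zero ψ₁ hψ₁ m (by simp only [mem_Icc]; omega), zero_mul]

theorem sum_eqW_of_le (h : IsSymmetricGeneration K Ψ q V C r) {ψ : ℕ} (hψ : ψ ∈ Icc 1 K) {n : ℕ}
    (hn : (q + 1) * K < n) : ∑ m ∈ range n, eqW (genNet K Ψ) (q * K + ψ) m = r := by
  rw [sum_range_eq_of_le (N := (q + 1) * K + 1) (fun m hm => ?_) hn, h.sum_eqW ψ hψ]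
  exact h.eqW_eq_zero ψ hψ m (by simp only [mem_Icc]; omega)

theorem add_sub_one_mul_pos (h : IsSymmetricGeneration K Ψ q V C r) (n : ℕ) :
    0 < V + (n - 1) * C := by
  nlinarith [h.one_le_sub, mul_nonneg (Nat.cast_nonneg n : (0 : ℝ) ≤ n) h.nonneg]

theorem eqBeta_eq (h : IsSymmetricGeneration K Ψ q V C r) {k : ℕ} (hk : k ∈ Icc 1 K)
    (hΨ : Ψ k ⊆ Icc 1 K) (x : {j // j ∈ nbr (genNet K Ψ) ((q + 1) * K + k)}) :
    eqBeta (genNet K Ψ) ((q + 1) * K + k) x = r / (V + (#(Ψ k) - 1) * C) := by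
  have hnbr := nbr_genNet_succ_mul_add q hk hΨ
  have hagent : ∀ j ∈ nbr (genNet K Ψ) ((q + 1) * K + k), ∃ ψ ∈ Icc 1 K, j = q * K + ψ := by
    intro j hj
    rw [hnbr] at hj
    obtain ⟨ψ, hψ, rfl⟩ := mem_image.1 hj
    exact ⟨ψ, hΨ hψ, rfl⟩
  have hwin : (q + 1) * K < (q + 1) * K + k := by simp only [mem_Icc] at hk; omega
  have hcard : #(nbr (genNet K Ψ) ((q + 1) * K + k)) = #(Ψ k) := by
    rw [hnbr, card_image_of_injective (Ψ k) (add_right_injective (q * K))]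
  rw [← hcard]
  refine eqBeta_eq_of_hatW (by linarith [h.one_le_sub]) (h.add_sub_one_mul_pos _).ne'
    (ext fun j j' => ?_) (fun j => ?_) x
  · obtain ⟨ψ, hψ, hj⟩ := hagent j j.2
    obtain ⟨ψ', hψ', hj'⟩ := hagent j' j'.2
    have hj0 : eqW (genNet K Ψ) j 0 = 0 := by rw [hj]; exact h.eqW_eq_zero ψ hψ 0 (by simp)
    simp only [mul_apply, transpose_apply, of_apply]
    rw [sum_hatW_mul_hatW j j' hj0, hj, hj', h.gram_of_le hψ hψ' hwin]
    refine if_congr ⟨?_, fun hjj => ?_⟩ rfl rfl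
    · rintro rfl; exact Subtype.ext (hj.trans hj'.symm)
    · have := congrArg Subtype.val hjj; omega
  · obtain ⟨ψ, hψ, hj⟩ := hagent j j.2
    have hj0 : eqW (genNet K Ψ) j 0 = 0 := by rw [hj]; exact h.eqW_eq_zero ψ hψ 0 (by simp)
    rw [sum_hatW j hj0, hj, h.sum_eqW_of_le hψ hwin]

theorem eqW_succ_mul_add (h : IsSymmetricGeneration K Ψ q V C r) {k : ℕ} (hk : k ∈ Icc 1 K)
    (hΨ : Ψ k ⊆ Icc 1 K) (m : ℕ) :
    eqW (genNet K Ψ) ((q + 1) * K + k) m = (if m = (q + 1) * K + k then 1 else 0)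
      + r / (V + (#(Ψ k) - 1) * C) * ∑ ψ ∈ Ψ k, eqW (genNet K Ψ) (q * K + ψ) m := by
  rw [eqW_apply, sum_congr rfl fun j _ => by rw [h.eqBeta_eq hk hΨ j], ← mul_sum,
    sum_coe_sort (nbr (genNet K Ψ) ((q + 1) * K + k)) (fun j => eqW (genNet K Ψ) j m),
    nbr_genNet_succ_mul_add q hk hΨ, sum_image fun _ _ _ _ => by omega]

theorem sum_eqW_of_subset_eq_zero (h : IsSymmetricGeneration K Ψ q V C r) {A : Finset ℕ}
    (hA : A ⊆ Icc 1 K) {m : ℕ} (hm : m ∉ Icc 1 ((q + 1) * K)) :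
    ∑ ψ ∈ A, eqW (genNet K Ψ) (q * K + ψ) m = 0 :=
  sum_eq_zero fun ψ hψ => h.eqW_eq_zero ψ (hA hψ) m hm

theorem gram_succ (h : IsSymmetricGeneration K Ψ q V C r) {k₁ k₂ : ℕ} (hk₁ : k₁ ∈ Icc 1 K)
    (hk₂ : k₂ ∈ Icc 1 K) (hΨ₁ : Ψ k₁ ⊆ Icc 1 K) (hΨ₂ : Ψ k₂ ⊆ Icc 1 K) :
    ∑ m ∈ range ((q + 1 + 1) * K + 1),
      eqW (genNet K Ψ) ((q + 1) * K + k₁) m * eqW (genNet K Ψ) ((q + 1) * K + k₂) m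
      = (if k₁ = k₂ then 1 else 0) + r / (V + (#(Ψ k₁) - 1) * C) * (r / (V + (#(Ψ k₂) - 1) * C))
        * (#(Ψ k₁ ∩ Ψ k₂) * (V - C) + #(Ψ k₁) * #(Ψ k₂) * C) := by
  have := mem_Icc.1 hk₁
  have := mem_Icc.1 hk₂
  have hout : ∀ k ∈ Icc 1 K, (q + 1) * K + k ∉ Icc 1 ((q + 1) * K) := fun k hk => by
    simp only [mem_Icc] at hk ⊢; omega
  simp only [h.eqW_succ_mul_add hk₁ hΨ₁, h.eqW_succ_mul_add hk₂ hΨ₂]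
  rw [sum_ite_add_mul_ite_add (mem_range.2 (by nlinarith))
    (by rw [h.sum_eqW_of_subset_eq_zero hΨ₁ (hout k₂ hk₂), mul_zero])
    (by rw [h.sum_eqW_of_subset_eq_zero hΨ₂ (hout k₁ hk₁), mul_zero])]
  simp only [mul_mul_mul_comm _ (∑ ψ ∈ Ψ k₁, _), ← mul_sum]
  rw [sum_sum_mul_sum_of_gram fun ψ₁ hψ₁ ψ₂ hψ₂ =>
    h.gram_of_le (hΨ₁ hψ₁) (hΨ₂ hψ₂) (by nlinarith)]
  simp only [Nat.add_left_cancel_iff]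

theorem sum_eqW_succ (h : IsSymmetricGeneration K Ψ q V C r) {k : ℕ} (hk : k ∈ Icc 1 K)
    (hΨ : Ψ k ⊆ Icc 1 K) :
    ∑ m ∈ range ((q + 1 + 1) * K + 1), eqW (genNet K Ψ) ((q + 1) * K + k) m
      = 1 + r / (V + (#(Ψ k) - 1) * C) * #(Ψ k) * r := by
  have := mem_Icc.1 hk
  simp only [h.eqW_succ_mul_add hk hΨ]
  rw [sum_add_distrib, sum_ite_eq', if_pos (mem_range.2 (by nlinarith)), ← mul_sum, sum_comm,
    sum_congr rfl fun ψ hψ => h.sum_eqW_of_le (hΨ hψ) (by nlinarith), sum_const, nsmul_eq_mul,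
    mul_assoc]

theorem succ (h : IsSymmetricGeneration K Ψ q V C r) {d c : ℕ}
    (hsub : ∀ k ∈ Icc 1 K, Ψ k ⊆ Icc 1 K) (hcard : ∀ k ∈ Icc 1 K, #(Ψ k) = d)
    (hinter : ∀ k₁ ∈ Icc 1 K, ∀ k₂ ∈ Icc 1 K, k₁ ≠ k₂ → #(Ψ k₁ ∩ Ψ k₂) = c) (hcd : c ≤ d) :
    ∃ V' C' r', IsSymmetricGeneration K Ψ (q + 1) V' C' r' := by
  set β := r / (V + (d - 1) * C)
  have hVC : 0 ≤ V - C := by linarith [h.one_le_sub]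
  refine ⟨1 + β * β * (d * (V - C) + d * d * C), β * β * (c * (V - C) + d * d * C),
    1 + β * d * r, fun k hk m hm => ?_, fun k₁ hk₁ k₂ hk₂ => ?_, fun k hk => ?_, ?_, ?_⟩
  · have := mem_Icc.1 hk
    have : (q + 1 + 1) * K = (q + 1) * K + K := by ring
    simp only [mem_Icc, not_and_or, not_le] at hm
    rw [h.eqW_succ_mul_add hk (hsub k hk), if_neg (by rintro rfl; omega),
      h.sum_eqW_of_subset_eq_zero (hsub k hk) (by simp only [mem_Icc]; omega), mul_zero, add_zero]
  · rw [h.gram_succ hk₁ hk₂ (hsub k₁ hk₁) (hsub k₂ hk₂), hcard k₁ hk₁, hcard k₂ hk₂]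
    split_ifs with hk
    · rw [← hk, inter_self, hcard k₁ hk₁]
    · rw [hinter k₁ hk₁ k₂ hk₂ hk]
      ring
  · rw [h.sum_eqW_succ hk (hsub k hk), hcard k hk]
  · have hdc : (0 : ℝ) ≤ d - c := sub_nonneg.2 (Nat.cast_le.2 hcd)
    nlinarith [mul_nonneg (mul_self_nonneg β) (mul_nonneg hdc hVC)]
  · exact mul_nonneg (mul_self_nonneg β)
      (add_nonneg (mul_nonneg c.cast_nonneg hVC) (mul_nonneg (mul_self_nonneg _) h.nonneg))

end IsSymmetricGeneration

theorem exists_isSymmetricGeneration {K d c : ℕ} {Ψ : ℕ → Finset ℕ}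
    (hsub : ∀ k ∈ Icc 1 K, Ψ k ⊆ Icc 1 K) (hcard : ∀ k ∈ Icc 1 K, #(Ψ k) = d)
    (hinter : ∀ k₁ ∈ Icc 1 K, ∀ k₂ ∈ Icc 1 K, k₁ ≠ k₂ → #(Ψ k₁ ∩ Ψ k₂) = c) (hcd : c ≤ d)
    (q : ℕ) : ∃ V C r, IsSymmetricGeneration K Ψ q V C r := by
  induction q with
  | zero => exact ⟨1, 0, 1, isSymmetricGeneration_zero K Ψ⟩
  | succ q ih =>
    obtain ⟨V, C, r, h⟩ := ih
    exact h.succ hsub hcard hinter hcd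

theorem symmetric_generations_symmetry_general (K d c : ℕ) (hK : 2 ≤ K)
    (Ψ : ℕ → Finset ℕ)
    (hsub : ∀ k ∈ Finset.Icc 1 K, Ψ k ⊆ Finset.Icc 1 K)
    (hcard : ∀ k ∈ Finset.Icc 1 K, (Ψ k).card = d)
    (hinter : ∀ k₁ ∈ Finset.Icc 1 K, ∀ k₂ ∈ Finset.Icc 1 K, k₁ ≠ k₂ →
      ((Ψ k₁) ∩ (Ψ k₂)).card = c) :
    (∀ t : ℕ, 1 ≤ t → ∀ k ∈ Finset.Icc 1 K, ∀ k' ∈ Finset.Icc 1 K,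
      (∑ j ∈ Finset.range (t * K + 1), (eqW (genNet K Ψ) ((t - 1) * K + k) j) ^ 2)
        = ∑ j ∈ Finset.range (t * K + 1), (eqW (genNet K Ψ) ((t - 1) * K + k') j) ^ 2) ∧
    (∀ t : ℕ, 1 ≤ t → ∀ k₁ ∈ Finset.Icc 1 K, ∀ k₂ ∈ Finset.Icc 1 K,
      ∀ k₁' ∈ Finset.Icc 1 K, ∀ k₂' ∈ Finset.Icc 1 K, k₁ ≠ k₂ → k₁' ≠ k₂' →
      (∑ j ∈ Finset.range (t * K + 1),
          eqW (genNet K Ψ) ((t - 1) * K + k₁) j * eqW (genNet K Ψ) ((t - 1) * K + k₂) j)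
        = ∑ j ∈ Finset.range (t * K + 1),
            eqW (genNet K Ψ) ((t - 1) * K + k₁') j
              * eqW (genNet K Ψ) ((t - 1) * K + k₂') j) ∧
    (∀ t : ℕ, 2 ≤ t → ∀ k ∈ Finset.Icc 1 K, ∀ k' ∈ Finset.Icc 1 K,
      ∀ j (hj : j ∈ nbr (genNet K Ψ) ((t - 1) * K + k))
        (j' : ℕ) (hj' : j' ∈ nbr (genNet K Ψ) ((t - 1) * K + k')),
      eqBeta (genNet K Ψ) ((t - 1) * K + k) ⟨j, hj⟩
        = eqBeta (genNet K Ψ) ((t - 1) * K + k') ⟨j', hj'⟩) := by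
  have h₁ : 1 ∈ Icc 1 K := mem_Icc.2 ⟨le_rfl, by omega⟩
  have h₂ : 2 ∈ Icc 1 K := mem_Icc.2 ⟨by omega, hK⟩
  have hcd : c ≤ d := calc
    c = #(Ψ 1 ∩ Ψ 2) := (hinter 1 h₁ 2 h₂ (by omega)).symm
    _ ≤ #(Ψ 1) := card_le_card inter_subset_left
    _ = d := hcard 1 h₁
  have hgen := exists_isSymmetricGeneration hsub hcard hinter hcd
  refine ⟨fun t ht k hk k' hk' => ?_, fun t ht k₁ hk₁ k₂ hk₂ k₁' hk₁' k₂' hk₂' hne hne' => ?_,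
    fun t ht k hk k' hk' j hj j' hj' => ?_⟩
  · obtain ⟨q, rfl⟩ : ∃ q, t = q + 1 := ⟨t - 1, by omega⟩
    obtain ⟨V, C, r, h⟩ := hgen q
    simp only [Nat.add_sub_cancel, sq, h.gram k hk k hk, h.gram k' hk' k' hk', if_true]
  · obtain ⟨q, rfl⟩ : ∃ q, t = q + 1 := ⟨t - 1, by omega⟩
    obtain ⟨V, C, r, h⟩ := hgen q
    simp only [Nat.add_sub_cancel, h.gram k₁ hk₁ k₂ hk₂, h.gram k₁' hk₁' k₂' hk₂', if_neg hne,
      if_neg hne']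
  · obtain ⟨q, rfl⟩ : ∃ q, t = q + 2 := ⟨t - 2, by omega⟩
    obtain ⟨V, C, r, h⟩ := hgen q
    have hβ : ∀ k ∈ Icc 1 K, ∀ x, eqBeta (genNet K Ψ) ((q + 1) * K + k) x
        = r / (V + (d - 1) * C) := fun k hk x => by
      rw [h.eqBeta_eq hk (hsub k hk), hcard k hk]
    exact (hβ k hk ⟨j, hj⟩).trans (hβ k' hk' ⟨j', hj'⟩).symm

/-- In a generations network with generation size `K ≥ 2`
associated to symmetric observation sets with parameters `(d, c)`, `d ≥ 2`:
(i) `Σ_j W_i(j)²` (the conditional variance, up to `4/σ²`) is the same for all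
agents `i` in generation `t`; (ii) `Σ_j W_i(j)W_{i′}(j)` (the conditional
covariance) is the same for all pairs of distinct agents of generation `t`; and
(iii) for `t ≥ 2` all components of `β_i` are equal, with common value depending
only on `t`. -/
theorem symmetric_generations_symmetry (K d c : ℕ) (hK : 2 ≤ K) (hd : 2 ≤ d)
    (Ψ : ℕ → Finset ℕ)
    (hsub : ∀ k ∈ Finset.Icc 1 K, Ψ k ⊆ Finset.Icc 1 K)
    (hcard : ∀ k ∈ Finset.Icc 1 K, (Ψ k).card = d)
    (hinter : ∀ k₁ ∈ Finset.Icc 1 K, ∀ k₂ ∈ Finset.Icc 1 K, k₁ ≠ k₂ →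
      ((Ψ k₁) ∩ (Ψ k₂)).card = c) :
    (∀ t : ℕ, 1 ≤ t → ∀ k ∈ Finset.Icc 1 K, ∀ k' ∈ Finset.Icc 1 K,
      (∑ j ∈ Finset.range (t * K + 1), (eqW (genNet K Ψ) ((t - 1) * K + k) j) ^ 2)
        = ∑ j ∈ Finset.range (t * K + 1), (eqW (genNet K Ψ) ((t - 1) * K + k') j) ^ 2) ∧
    (∀ t : ℕ, 1 ≤ t → ∀ k₁ ∈ Finset.Icc 1 K, ∀ k₂ ∈ Finset.Icc 1 K,
      ∀ k₁' ∈ Finset.Icc 1 K, ∀ k₂' ∈ Finset.Icc 1 K, k₁ ≠ k₂ → k₁' ≠ k₂' →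
      (∑ j ∈ Finset.range (t * K + 1),
          eqW (genNet K Ψ) ((t - 1) * K + k₁) j * eqW (genNet K Ψ) ((t - 1) * K + k₂) j)
        = ∑ j ∈ Finset.range (t * K + 1),
            eqW (genNet K Ψ) ((t - 1) * K + k₁') j
              * eqW (genNet K Ψ) ((t - 1) * K + k₂') j) ∧
    (∀ t : ℕ, 2 ≤ t → ∀ k ∈ Finset.Icc 1 K, ∀ k' ∈ Finset.Icc 1 K,
      ∀ j (hj : j ∈ nbr (genNet K Ψ) ((t - 1) * K + k))
        (j' : ℕ) (hj' : j' ∈ nbr (genNet K Ψ) ((t - 1) * K + k')),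
      eqBeta (genNet K Ψ) ((t - 1) * K + k) ⟨j, hj⟩
        = eqBeta (genNet K Ψ) ((t - 1) * K + k') ⟨j', hj'⟩) :=
  symmetric_generations_symmetry_general K d c hK Ψ hsub hcard hinter
end

section
/- Let K ≥ 2 and let Ψ_k ⊆ {1,…,K} (1 ≤ k ≤ K) be symmetric observation sets with |Ψ_k| = d ≥ 1 for all k and |Ψ_{k₁} ∩ Ψ_{k₂}| = c ≥ 1 for all distinct k₁, k₂. Define the K×K row-stochastic matrix P by P_{i,j} = 1/d if j ∈ Ψ_i and P_{i,j} = 0 otherwise. Then the matrix powers P^t converge entrywise as t → ∞, and all rows of the limit are equal: there is a probability vector p* ∈ [0,1]^K with Σ_k p*_k = 1 such that lim_{t→∞} (P^t)_{i,·} = p* for every 1 ≤ i ≤ K. In particular, every function v : {1,…,K} → ℝ satisfying v(i) = (1/d)·Σ_{j∈Ψ_i} v(j) for all i is constant. -/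
/-!
The incidence conditions give `P Pᵀ = ((d - c) • 1 + c • J) / d ^ 2`, so on vectors with
coordinate sum zero, a subspace that `y ↦ y ᵥ* P` preserves because `P` is row-stochastic,
this map multiplies the squared Euclidean norm by `(d - c) / d ^ 2 < 1`. Hence each row
`e_i ᵥ* P ^ t` is a Cauchy sequence and the difference of any two rows tends to zero, so all
rows converge to one probability vector `p`. A harmonic `v` satisfies `v i = (P ^ t *ᵥ v) i`,
whose limit `p ⬝ᵥ v` does not depend on `i`.
-/

open Matrix Finset Filter

lemma norm_le_sqrt_dotProduct_self {n : Type*} [Fintype n] (x : n → ℝ) :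
    ‖x‖ ≤ √(x ⬝ᵥ x) := by
  refine (pi_norm_le_iff_of_nonneg (Real.sqrt_nonneg _)).2 fun i => Real.abs_le_sqrt ?_
  rw [sq]
  exact single_le_sum (f := fun j => x j * x j) (fun j _ => mul_self_nonneg _) (mem_univ i)

def ContractsOnSumZero {n : Type*} [Fintype n] (P : Matrix n n ℝ) (r : ℝ) : Prop :=
  ∀ y : n → ℝ, y ⬝ᵥ 1 = 0 → (y ᵥ* P) ⬝ᵥ (y ᵥ* P) ≤ r * (y ⬝ᵥ y)

section Contraction

variable {n : Type*} [Fintype n] [DecidableEq n] {P : Matrix n n ℝ} {r : ℝ}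

lemma vecMul_dotProduct_one_of_mem_rowStochastic (hP : P ∈ rowStochastic ℝ n) (y : n → ℝ) :
    (y ᵥ* P) ⬝ᵥ 1 = y ⬝ᵥ 1 := by
  rw [← dotProduct_mulVec, hP.2]

lemma norm_vecMul_pow_le (hP : P ∈ rowStochastic ℝ n) (hr : 0 ≤ r)
    (hcontr : ContractsOnSumZero P r) (t : ℕ) {y : n → ℝ} (hy : y ⬝ᵥ 1 = 0) :
    ‖y ᵥ* P ^ t‖ ≤ √(y ⬝ᵥ y) * √r ^ t := by
  have hsq : (y ᵥ* P ^ t) ⬝ᵥ (y ᵥ* P ^ t) ≤ r ^ t * (y ⬝ᵥ y) := by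
    induction t generalizing y with
    | zero => simp
    | succ t ih =>
      rw [pow_succ', ← vecMul_vecMul, pow_succ, mul_assoc]
      exact (ih (by rwa [vecMul_dotProduct_one_of_mem_rowStochastic hP])).trans
        (mul_le_mul_of_nonneg_left (hcontr y hy) (pow_nonneg hr t))
  have hpow : √(r ^ t) = √r ^ t := by
    rw [← Real.sqrt_sq (pow_nonneg (Real.sqrt_nonneg r) t), ← pow_mul, mul_comm, pow_mul,
      Real.sq_sqrt hr]
  calc ‖y ᵥ* P ^ t‖ ≤ √((y ᵥ* P ^ t) ⬝ᵥ (y ᵥ* P ^ t)) := norm_le_sqrt_dotProduct_self _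
    _ ≤ √(r ^ t * (y ⬝ᵥ y)) := Real.sqrt_le_sqrt hsq
    _ = √(y ⬝ᵥ y) * √r ^ t := by rw [Real.sqrt_mul (pow_nonneg hr t), hpow, mul_comm]

lemma tendsto_vecMul_pow_zero (hP : P ∈ rowStochastic ℝ n) (hr : 0 ≤ r) (hr1 : r < 1)
    (hcontr : ContractsOnSumZero P r) {y : n → ℝ} (hy : y ⬝ᵥ 1 = 0) :
    Tendsto (fun t => y ᵥ* P ^ t) atTop (nhds 0) := by
  have hbound : Tendsto (fun t => √(y ⬝ᵥ y) * √r ^ t) atTop (nhds 0) := by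
    simpa using (tendsto_pow_atTop_nhds_zero_of_lt_one (Real.sqrt_nonneg r)
      ((Real.sqrt_lt' one_pos).2 (by simpa using hr1))).const_mul (√(y ⬝ᵥ y))
  exact squeeze_zero_norm (fun t => norm_vecMul_pow_le hP hr hcontr t hy) hbound

lemma cauchySeq_vecMul_pow (hP : P ∈ rowStochastic ℝ n) (hr : 0 ≤ r) (hr1 : r < 1)
    (hcontr : ContractsOnSumZero P r) (x : n → ℝ) : CauchySeq fun t => x ᵥ* P ^ t := by
  have hy : (x - x ᵥ* P) ⬝ᵥ 1 = 0 := by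
    rw [sub_dotProduct, vecMul_dotProduct_one_of_mem_rowStochastic hP, sub_self]
  refine cauchySeq_of_le_geometric (√r) (√((x - x ᵥ* P) ⬝ᵥ (x - x ᵥ* P)))
    ((Real.sqrt_lt' one_pos).2 (by simpa using hr1)) fun t => ?_
  rw [dist_eq_norm, pow_succ', ← vecMul_vecMul, ← sub_vecMul]
  exact norm_vecMul_pow_le hP hr hcontr t hy

theorem exists_tendsto_pow_of_contractsOnSumZero [Nonempty n] (hP : P ∈ rowStochastic ℝ n)
    (hr : 0 ≤ r) (hr1 : r < 1) (hcontr : ContractsOnSumZero P r) :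
    ∃ p ∈ stdSimplex ℝ n, ∀ i, Tendsto (fun t => (P ^ t) i) atTop (nhds p) := by
  obtain ⟨i₀⟩ := ‹Nonempty n›
  obtain ⟨p, hp⟩ := cauchySeq_tendsto_of_complete
    (cauchySeq_vecMul_pow hP hr hr1 hcontr (Pi.single i₀ 1))
  simp only [single_one_vecMul, row_apply'] at hp
  refine ⟨p, isClosed_stdSimplex ℝ n |>.mem_of_tendsto hp (Eventually.of_forall fun t => ?_),
    fun i => ?_⟩
  · have hPt := pow_mem hP t
    exact ⟨fun j => nonneg_of_mem_rowStochastic hPt, sum_row_of_mem_rowStochastic hPt i₀⟩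
  · have hy : (Pi.single i 1 - Pi.single i₀ 1 : n → ℝ) ⬝ᵥ 1 = 0 := by
      simp [sub_dotProduct]
    simpa [sub_vecMul, single_one_vecMul, row_apply'] using
      (tendsto_vecMul_pow_zero hP hr hr1 hcontr hy).add hp

lemma pow_mulVec_eq_self {v : n → ℝ} (hv : P *ᵥ v = v) (t : ℕ) : P ^ t *ᵥ v = v := by
  induction t with
  | zero => simp
  | succ t ih => rw [pow_succ, ← mulVec_mulVec, hv, ih]

theorem eq_dotProduct_of_mulVec_eq_self {v p : n → ℝ}
    (hlim : ∀ i, Tendsto (fun t => (P ^ t) i) atTop (nhds p)) (hv : P *ᵥ v = v) (i : n) :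
    v i = p ⬝ᵥ v := by
  have hrow : Tendsto (fun t => (P ^ t) i ⬝ᵥ v) atTop (nhds (p ⬝ᵥ v)) :=
    ((continuous_id.dotProduct (continuous_const : Continuous fun _ : n → ℝ => v)).tendsto p).comp
      (hlim i)
  exact tendsto_nhds_unique
    (tendsto_const_nhds.congr fun t => (congrFun (pow_mulVec_eq_self hv t) i).symm) hrow

end Contraction

noncomputable def observationMatrix {n : Type*} [DecidableEq n] (Ψ : n → Finset n) (d : ℕ) : Matrix n n ℝ :=
  Matrix.of fun a b => if b ∈ Ψ a then 1 / (d : ℝ) else 0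

section ObservationSets

variable {n : Type*} [Fintype n] [DecidableEq n] (Ψ : n → Finset n) {d c : ℕ}

lemma observationMatrix_mulVec_apply (v : n → ℝ) (i : n) :
    (observationMatrix Ψ d *ᵥ v) i = 1 / d * ∑ j ∈ Ψ i, v j := by
  simp [observationMatrix, mulVec_apply_eq_sum, ite_mul, Finset.mul_sum]

lemma observationMatrix_mem_rowStochastic (hd : 1 ≤ d) (hcard : ∀ k, #(Ψ k) = d) :
    observationMatrix Ψ d ∈ rowStochastic ℝ n := by
  refine mem_rowStochastic.2 ⟨fun i j => ?_, funext fun i => ?_⟩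
  · simp only [observationMatrix, of_apply]
    split_ifs <;> positivity
  · have : (d : ℝ) ≠ 0 := by positivity
    simp [observationMatrix_mulVec_apply, hcard, this]

lemma observationMatrix_mul_transpose_apply (i k : n) :
    (observationMatrix Ψ d * (observationMatrix Ψ d)ᵀ) i k = #(Ψ i ∩ Ψ k) / d ^ 2 := by
  simp [observationMatrix, mul_apply, ← ite_and, Finset.sum_ite, Finset.filter_and,
    Finset.inter_comm, div_eq_mul_inv, mul_comm, pow_two]

lemma observationMatrix_mul_transpose_mulVec (hcard : ∀ k, #(Ψ k) = d)
    (hinter : ∀ k₁ k₂, k₁ ≠ k₂ → #(Ψ k₁ ∩ Ψ k₂) = c) {y : n → ℝ} (hy : y ⬝ᵥ 1 = 0) :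
    (observationMatrix Ψ d * (observationMatrix Ψ d)ᵀ) *ᵥ y = ((d - c) / d ^ 2 : ℝ) • y := by
  have hcast : ∀ i k, (#(Ψ i ∩ Ψ k) : ℝ) = c + if i = k then (d - c : ℝ) else 0 := by
    intro i k
    by_cases hik : i = k
    · simp [hik, hcard]
    · simp [hik, hinter i k hik]
  ext i
  rw [dotProduct_one] at hy
  simp [mulVec_apply_eq_sum, observationMatrix_mul_transpose_apply, hcast, add_div, add_mul,
    Finset.sum_add_distrib, ← Finset.mul_sum, hy, ite_div, ite_mul]

lemma contractsOnSumZero_observationMatrix (hc : 1 ≤ c) (hcard : ∀ k, #(Ψ k) = d)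
    (hinter : ∀ k₁ k₂, k₁ ≠ k₂ → #(Ψ k₁ ∩ Ψ k₂) = c) :
    ContractsOnSumZero (observationMatrix Ψ d) ((d - 1) / d ^ 2) := by
  intro y hy
  have hc' : (1 : ℝ) ≤ c := by exact_mod_cast hc
  nth_rewrite 2 [← mulVec_transpose]
  rw [← dotProduct_mulVec, mulVec_mulVec,
    observationMatrix_mul_transpose_mulVec Ψ hcard hinter hy, dotProduct_smul, smul_eq_mul]
  gcongr
  exact Finset.sum_nonneg fun i _ => mul_self_nonneg _

end ObservationSets

/-- Let `Ψ_1,…,Ψ_K` be symmetric observation sets on `K ≥ 2`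
positions with `|Ψ_k| = d ≥ 1` and `|Ψ_{k₁} ∩ Ψ_{k₂}| = c ≥ 1` for distinct
`k₁, k₂`, and let `P` be the row-stochastic matrix of the associated Markov chain
(`P_{i,j} = 1/d` if `j ∈ Ψ_i`, else `0`). Then the matrix powers `P^t` converge
entrywise to a limit all of whose rows equal a single probability vector `p*`;
in particular every `v` with `v(i) = (1/d)·Σ_{j∈Ψ_i} v(j)` for all `i` is
constant. -/
theorem symmetric_markov_chain_mixing (K d c : ℕ) (hK : 2 ≤ K) (hd : 1 ≤ d)
    (hc : 1 ≤ c) (Ψ : Fin K → Finset (Fin K))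
    (hcard : ∀ k, (Ψ k).card = d)
    (hinter : ∀ k₁ k₂ : Fin K, k₁ ≠ k₂ → ((Ψ k₁) ∩ (Ψ k₂)).card = c) :
    (∃ p : Fin K → ℝ, (∀ k, 0 ≤ p k) ∧ (∀ k, p k ≤ 1) ∧ (∑ k, p k) = 1 ∧
      ∀ i j : Fin K,
        Tendsto
          (fun t : ℕ =>
            ((Matrix.of fun a b : Fin K =>
              if b ∈ Ψ a then 1 / (d : ℝ) else 0) ^ t) i j)
          atTop (nhds (p j))) ∧
    (∀ v : Fin K → ℝ,
      (∀ i, v i = (1 / (d : ℝ)) * ∑ j ∈ Ψ i, v j) → ∀ i j, v i = v j) := by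
  have : Nonempty (Fin K) := ⟨⟨0, by omega⟩⟩
  have hd' : (1 : ℝ) ≤ d := by exact_mod_cast hd
  obtain ⟨p, hp, hlim⟩ := exists_tendsto_pow_of_contractsOnSumZero
    (observationMatrix_mem_rowStochastic Ψ hd hcard) (by bound)
    (by rw [div_lt_one (by positivity)]; nlinarith)
    (contractsOnSumZero_observationMatrix Ψ hc hcard hinter)
  refine ⟨⟨p, fun k => (mem_Icc_of_mem_stdSimplex hp k).1,
    fun k => (mem_Icc_of_mem_stdSimplex hp k).2, hp.2, fun i j => tendsto_pi_nhds.1 (hlim i) j⟩,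
    fun v hv i j => ?_⟩
  have hfix : observationMatrix Ψ d *ᵥ v = v :=
    funext fun i => by rw [observationMatrix_mulVec_apply, ← hv i]
  rw [eq_dotProduct_of_mulVec_eq_self hlim hfix i, eq_dotProduct_of_mulVec_eq_self hlim hfix j]
end

section
/- For every σ > 0, the expected equilibrium welfare v_σ(r) is a strictly increasing function of the number r of aggregated signals: if r > r′ ≥ 1 then v_σ(r) > v_σ(r′). -/
/-!
With `m = 2r/σ²`, the log posterior-odds `x` is the log-likelihood ratio of `N(m, 2m)` against
`N(-m, 2m)`, and both densities are exponential tilts `e^{±x/2 - m/4}` of the `N(0, 2m)` density.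
Since the posterior is `sigmoid x`, the two quadratic losses combine pointwise into
`e^{-m/4} / (2 cosh (x/2))` times that density, so
`v_σ(r) = -¼ e^{-r/(2σ²)} E[sech (X/2)]` with `X ~ N(0, 4r/σ²)`.
The exponential factor strictly decreases in `r`, and `E[sech (X/2)] = E[sech (√v Z/2)]` for a
standard normal `Z` is antitone in the variance `v`.
-/

open MeasureTheory ProbabilityTheory Real

open scoped NNReal

lemma exp_div_one_add_exp (x : ℝ) : exp x / (1 + exp x) = sigmoid x := by
  rw [sigmoid_def, exp_neg]
  field_simp
  ring

lemma sigmoid_eq_exp_div_two_mul_cosh (x : ℝ) : sigmoid x = exp (x / 2) / (2 * cosh (x / 2)) := by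
  have hx : exp (-x) = exp (-(x / 2)) * exp (-(x / 2)) := by rw [← exp_add]; ring_nf
  rw [sigmoid_def, cosh_eq, hx, exp_neg]
  field_simp

lemma exp_mul_sigmoid_neg_sq_add (x : ℝ) :
    exp (x / 2) * sigmoid (-x) ^ 2 + exp (-(x / 2)) * sigmoid x ^ 2 = (2 * cosh (x / 2))⁻¹ := by
  have hcosh : 2 * cosh (x / 2) = exp (x / 2) + exp (-(x / 2)) := by rw [cosh_eq]; ring
  have hprod : exp (x / 2) * exp (-(x / 2)) = 1 := by rw [← exp_add]; simp
  rw [sigmoid_eq_exp_div_two_mul_cosh, sigmoid_eq_exp_div_two_mul_cosh, neg_div, cosh_neg, hcosh]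
  field_simp
  linear_combination (exp (x / 2) + exp (-(x / 2))) * hprod

lemma gaussianPDFReal_eq_exp_mul (μ : ℝ) (v : ℝ≥0) (x : ℝ) :
    gaussianPDFReal μ v x = exp (μ * x / v - μ ^ 2 / (2 * v)) * gaussianPDFReal 0 v x := by
  by_cases hv : (v : ℝ) = 0
  · simp [gaussianPDFReal, hv]
  rw [gaussianPDFReal, gaussianPDFReal, mul_left_comm, ← exp_add]
  congr 2
  field_simp
  ring

lemma integral_gaussianReal_zero_eq_integral_sqrt_mul (v : ℝ≥0) {f : ℝ → ℝ}
    (hf : AEStronglyMeasurable f (gaussianReal 0 v)) :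
    ∫ x, f x ∂gaussianReal 0 v = ∫ z, f (sqrt v * z) ∂gaussianReal 0 1 := by
  have hmap : (gaussianReal 0 1).map (sqrt v * ·) = gaussianReal 0 v := by
    rw [gaussianReal_map_const_mul, mul_zero, mul_one]
    congr 1
    ext
    simp
  rw [← hmap] at hf ⊢
  exact integral_map (by fun_prop) hf

lemma integrable_inv_cosh_comp {μ : Measure ℝ} [IsFiniteMeasure μ] {g : ℝ → ℝ}
    (hg : Measurable g) :
    Integrable (fun x => (cosh (g x))⁻¹) μ := by
  refine Integrable.of_bound (by fun_prop) 1 (ae_of_all _ fun x => ?_)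
  rw [norm_inv, norm_of_nonneg (cosh_pos _).le]
  exact inv_le_one_of_one_le₀ (one_le_cosh _)

lemma integral_inv_cosh_half_pos (μ : Measure ℝ) [IsProbabilityMeasure μ] :
    0 < ∫ x, (cosh (x / 2))⁻¹ ∂μ := by
  have hsupport : Function.support (fun x : ℝ => (cosh (x / 2))⁻¹) = Set.univ :=
    Set.eq_univ_of_forall fun x => (inv_pos.2 (cosh_pos _)).ne'
  rw [integral_pos_iff_support_of_nonneg (fun x => (inv_pos.2 (cosh_pos _)).le)
    (integrable_inv_cosh_comp (by fun_prop)), hsupport]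
  simp

lemma antitone_integral_inv_cosh_half_gaussianReal :
    Antitone fun v : ℝ≥0 => ∫ x, (cosh (x / 2))⁻¹ ∂gaussianReal 0 v := by
  intro v w hvw
  dsimp only
  rw [integral_gaussianReal_zero_eq_integral_sqrt_mul v (by fun_prop),
    integral_gaussianReal_zero_eq_integral_sqrt_mul w (by fun_prop)]
  refine integral_mono (integrable_inv_cosh_comp (by fun_prop))
    (integrable_inv_cosh_comp (by fun_prop)) fun z => ?_
  have hsqrt : sqrt v ≤ sqrt w := sqrt_le_sqrt (by exact_mod_cast hvw)
  refine inv_anti₀ (cosh_pos _) (cosh_le_cosh.2 ?_)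
  rw [abs_div, abs_div, abs_mul, abs_mul, abs_of_nonneg (sqrt_nonneg v),
    abs_of_nonneg (sqrt_nonneg w)]
  gcongr

lemma integral_sigmoid_sq_add_integral_sigmoid_sq {m : ℝ} (hm : 0 < m) :
    ∫ x, sigmoid (-x) ^ 2 ∂gaussianReal m (2 * m).toNNReal
      + ∫ x, sigmoid x ^ 2 ∂gaussianReal (-m) (2 * m).toNNReal
      = exp (-(m / 4)) / 2 * ∫ x, (cosh (x / 2))⁻¹ ∂gaussianReal 0 (2 * m).toNNReal := by
  have hv : (2 * m).toNNReal ≠ 0 := by simpa using hm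
  have hv' : ((2 * m).toNNReal : ℝ) = 2 * m := coe_toNNReal _ (by positivity)
  have integrable (μ : ℝ) {f : ℝ → ℝ} (hf : Continuous f) (hbound : ∀ x, ‖f x‖ ≤ 1) :
      Integrable fun x => gaussianPDFReal μ (2 * m).toNNReal x * f x :=
    (integrable_gaussianPDFReal _ _).mul_bdd hf.aestronglyMeasurable (ae_of_all _ hbound)
  have sigmoid_sq_le_one (x : ℝ) : ‖sigmoid x ^ 2‖ ≤ 1 := by
    rw [norm_of_nonneg (by positivity)]
    exact pow_le_one₀ (sigmoid_nonneg x) (sigmoid_le_one x)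
  simp_rw [integral_gaussianReal_eq_integral_smul hv, smul_eq_mul]
  rw [← integral_add (integrable m (by fun_prop) fun x => sigmoid_sq_le_one (-x))
    (integrable (-m) (by fun_prop) sigmoid_sq_le_one), ← integral_const_mul]
  refine integral_congr_ae (ae_of_all _ fun x => ?_)
  have tilt_pos : exp (m * x / (2 * m) - m ^ 2 / (2 * (2 * m)))
      = exp (-(m / 4)) * exp (x / 2) := by
    rw [← exp_add]; congr 1; field_simp; ring
  have tilt_neg : exp (-m * x / (2 * m) - (-m) ^ 2 / (2 * (2 * m)))
      = exp (-(m / 4)) * exp (-(x / 2)) := by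
    rw [← exp_add]; congr 1; field_simp; ring
  dsimp only
  rw [gaussianPDFReal_eq_exp_mul m, gaussianPDFReal_eq_exp_mul (-m), hv', tilt_pos, tilt_neg]
  linear_combination
    exp (-(m / 4)) * gaussianPDFReal 0 (2 * m).toNNReal x * exp_mul_sigmoid_neg_sq_add x

lemma welfare_eq {σ r : ℝ} (hσ : σ ≠ 0) (hr : 0 < r) :
    welfare σ r = -(exp (-(r / (2 * σ ^ 2))) / 4)
      * ∫ x, (cosh (x / 2))⁻¹ ∂gaussianReal 0 (4 * r / σ ^ 2).toNNReal := by
  have key := integral_sigmoid_sq_add_integral_sigmoid_sq (m := 2 * r / σ ^ 2) (by positivity)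
  rw [show 2 * (2 * r / σ ^ 2) = 4 * r / σ ^ 2 by ring,
    show 2 * r / σ ^ 2 / 4 = r / (2 * σ ^ 2) by field_simp; ring] at key
  have sigmoid_sub_one_sq (x : ℝ) : (sigmoid x - 1) ^ 2 = sigmoid (-x) ^ 2 := by
    rw [sigmoid_neg]; ring
  simp only [welfare, exp_div_one_add_exp, sigmoid_sub_one_sq]
  linear_combination (-1 / 2) * key

/-- For every `σ > 0`, the expected equilibrium welfare `v_σ(r)` is
strictly increasing in the number `r` of aggregated signals: if `r > r′ ≥ 1` then
`v_σ(r) > v_σ(r′)`. -/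
theorem welfare_strictMono (σ : ℝ) (hσ : 0 < σ) (r r' : ℝ) (hr' : 1 ≤ r')
    (hrr' : r' < r) : welfare σ r' < welfare σ r := by
  have hr'_pos : 0 < r' := by linarith
  rw [welfare_eq hσ.ne' hr'_pos, welfare_eq hσ.ne' (hr'_pos.trans hrr'), neg_mul, neg_mul,
    neg_lt_neg_iff]
  have hexp : exp (-(r / (2 * σ ^ 2))) < exp (-(r' / (2 * σ ^ 2))) := by gcongr
  have hintegral := antitone_integral_inv_cosh_half_gaussianReal
    (toNNReal_le_toNNReal (by gcongr : 4 * r' / σ ^ 2 ≤ 4 * r / σ ^ 2))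
  exact mul_lt_mul (by gcongr) hintegral (integral_inv_cosh_half_pos _) (by positivity)
end

section
/- For any network with equilibrium weight vectors W_i and signal counts r_i := Σ_j W_i(j): if j ∈ N(i), then r_i ≥ r_j + 1. In particular, along any directed path in the network the signal counts increase by at least 1 per step, so r_i ≥ PL(i) + 1 where PL(i) is the length of the longest directed path starting from i. -/
open Matrix Finset Filter

/-- Length of the longest directed path in the network starting from `i`
(a directed path from `i` is a sequence `i = i₀, i₁, …, i_L` with
`i_{s+1} ∈ N(i_s)`; `PL(i) = 0` if `N(i) = ∅`). -/
noncomputable def PL (Net : ℕ → Finset ℕ) (i : ℕ) : ℕ :=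
  sSup {L | ∃ f : ℕ → ℕ, f 0 = i ∧ ∀ s < L, f (s + 1) ∈ Net (f s)}

/-!
Write `W_i = e_i + x`, where `x = Ŵᵀβ` is the orthogonal projection of `𝟙` onto the span of
the vectors `W_j`, `j ∈ N(i)`. Since `⟨x, 𝟙⟩ = ‖x‖²`, we get `r_i = 1 + ⟨x, 𝟙⟩ = ‖W_i‖²` for
every agent. For a neighbour `j`, `W_j` lies in that span, so `⟨x, W_j⟩ = ⟨𝟙, W_j⟩ = r_j`,
while `‖W_j‖² = r_j`; expanding `0 ≤ ‖x - W_j‖²` gives `‖x‖² ≥ r_j`, i.e. `r_i ≥ r_j + 1`.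
The Gram matrix `ŴŴᵀ` is invertible because the rows of `Ŵ` are triangular: `W_j` has a `1`
in coordinate `j` and vanishes beyond it. Summing the increments along a path, and using
`r ≥ 1` at its end, bounds `PL(i)`.
-/

namespace Matrix

variable {ι κ : Type*} [Fintype ι]

theorem vecMul_injective_of_triangular {R : Type*} [Ring R] [NoZeroDivisors R] [LinearOrder κ]
    {W : Matrix ι κ R} (p : ι → κ) (hp : Function.Injective p) (hdiag : ∀ i, W i (p i) ≠ 0)
    (hzero : ∀ i c, p i < c → W i c = 0) : Function.Injective W.vecMul := by
  classical
  suffices ∀ x, x ᵥ* W = 0 → x = 0 from fun x y hxy =>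
    sub_eq_zero.1 (this _ (by rw [sub_vecMul, sub_eq_zero]; exact hxy))
  intro x hx
  by_contra hne
  have hsupp : (univ.filter (x · ≠ 0)).Nonempty := by
    obtain ⟨i, hi⟩ := Function.ne_iff.1 hne
    exact ⟨i, by simpa using hi⟩
  obtain ⟨i₀, hi₀, hmax⟩ := exists_max_image _ p hsupp
  have hx₀ : x i₀ ≠ 0 := (mem_filter.1 hi₀).2
  have hcol : (x ᵥ* W) (p i₀) = x i₀ * W i₀ (p i₀) := by
    refine Fintype.sum_eq_single i₀ fun i hi => ?_
    by_cases hxi : x i = 0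
    · rw [hxi, zero_mul]
    · have hlt : p i < p i₀ :=
        lt_of_le_of_ne (hmax i (by simpa using hxi)) (hp.ne hi)
      show x i * W i (p i₀) = 0
      rw [hzero i _ hlt, mul_zero]
  rw [hx, Pi.zero_apply, eq_comm] at hcol
  exact mul_ne_zero hx₀ (hdiag i₀) hcol

variable [Fintype κ] [DecidableEq ι]

theorem isUnit_det_mul_transpose {W : Matrix ι κ ℝ} (hW : Function.Injective W.vecMul) :
    IsUnit (W * Wᵀ).det := by
  have := (PosDef.mul_conjTranspose_self W hW).isUnit
  rwa [conjTranspose_eq_transpose_of_trivial, isUnit_iff_isUnit_det] at this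

/-- For `W` with independent rows, the orthogonal projection of the all-ones vector onto the
row space of `W`. -/
noncomputable def rowSpaceProjOne (W : Matrix ι κ ℝ) : κ → ℝ :=
  (W *ᵥ 1) ᵥ* (W * Wᵀ)⁻¹ ᵥ* W

variable {W : Matrix ι κ ℝ}

theorem mulVec_rowSpaceProjOne (hW : IsUnit (W * Wᵀ).det) :
    W *ᵥ rowSpaceProjOne W = W *ᵥ 1 := by
  rw [rowSpaceProjOne, ← vecMul_transpose, vecMul_vecMul, vecMul_vecMul,
    nonsing_inv_mul _ hW, vecMul_one]

theorem rowSpaceProjOne_dotProduct_self (hW : IsUnit (W * Wᵀ).det) :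
    rowSpaceProjOne W ⬝ᵥ rowSpaceProjOne W = rowSpaceProjOne W ⬝ᵥ 1 := by
  set β := (W *ᵥ 1) ᵥ* (W * Wᵀ)⁻¹
  calc rowSpaceProjOne W ⬝ᵥ rowSpaceProjOne W = β ⬝ᵥ (W *ᵥ rowSpaceProjOne W) :=
        (dotProduct_mulVec _ _ _).symm
    _ = β ⬝ᵥ (W *ᵥ 1) := by rw [mulVec_rowSpaceProjOne hW]
    _ = rowSpaceProjOne W ⬝ᵥ 1 := dotProduct_mulVec _ _ _

theorem two_mul_row_dotProduct_one_sub_le (hW : IsUnit (W * Wᵀ).det) (k : ι) :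
    2 * (W k ⬝ᵥ 1) - W k ⬝ᵥ W k ≤ rowSpaceProjOne W ⬝ᵥ 1 := by
  have hxx := rowSpaceProjOne_dotProduct_self hW
  set x := rowSpaceProjOne W
  have hxk : W k ⬝ᵥ x = W k ⬝ᵥ 1 := congrFun (mulVec_rowSpaceProjOne hW) k
  have hsq := dotProduct_self_star_nonneg (x - W k)
  simp only [star_trivial, sub_dotProduct, dotProduct_sub, dotProduct_comm x (W k), hxk,
    hxx] at hsq
  linarith

end Matrix

theorem sum_range_eq_sum_fin_pred {M : Type*} [AddCommMonoid M] (f : ℕ → M) (n : ℕ)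
    (hf : f 0 = 0) : ∑ m ∈ range n, f m = ∑ m : Fin (n - 1), f (m + 1) := by
  cases n with
  | zero => simp
  | succ n => rw [sum_range_succ', hf, add_zero, Nat.add_sub_cancel,
    Fin.sum_univ_eq_sum_range (fun m => f (m + 1))]

section Network

variable (Net : ℕ → Finset ℕ)

def lowerNbhd (n : ℕ) : Finset ℕ := (Net n).filter (· < n)

/-- The paper's `Ŵ`: column `m` stands for agent `m + 1`. -/
noncomputable def nbhdMatrix (n : ℕ) : Matrix (lowerNbhd Net n) (Fin (n - 1)) ℝ :=
  of fun j m => eqW Net j (m + 1)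

/-- When `n` has no lower neighbours the sum is empty, so this also covers `W_n = e_n`. -/
theorem eqW_apply_s19 (n m : ℕ) :
    eqW Net n m = (if m = n then 1 else 0) + ∑ j : lowerNbhd Net n,
      ((nbhdMatrix Net n *ᵥ 1) ᵥ* (nbhdMatrix Net n * (nbhdMatrix Net n)ᵀ)⁻¹) j * eqW Net j m := by
  rw [eqW, Nat.strongRecOn_eq]
  by_cases h : (lowerNbhd Net n).Nonempty
  · rw [lowerNbhd] at h
    have hrowsum : nbhdMatrix Net n *ᵥ 1 = fun j => ∑ k, nbhdMatrix Net n j k :=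
      funext fun j => dotProduct_one _
    rw [if_pos h, hrowsum]
    rfl
  · have hempty : IsEmpty (lowerNbhd Net n) := by simpa using h
    rw [lowerNbhd] at h
    rw [if_neg h, Fintype.sum_empty, add_zero]

theorem lt_of_mem_lowerNbhd {j n : ℕ} (hj : j ∈ lowerNbhd Net n) : j < n :=
  (mem_filter.1 hj).2

theorem eqW_eq_zero_of_lt {n m : ℕ} (h : n < m) : eqW Net n m = 0 := by
  induction n using Nat.strong_induction_on generalizing m with
  | _ n ih =>
    rw [eqW_apply_s19, if_neg h.ne', zero_add]
    refine Fintype.sum_eq_zero _ fun j => ?_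
    have hj := lt_of_mem_lowerNbhd Net j.2
    rw [ih j hj (hj.trans h), mul_zero]

theorem eqW_self (n : ℕ) : eqW Net n n = 1 := by
  rw [eqW_apply_s19, if_pos rfl, add_eq_left]
  refine Fintype.sum_eq_zero _ fun j => ?_
  rw [eqW_eq_zero_of_lt Net (lt_of_mem_lowerNbhd Net j.2), mul_zero]

theorem eqW_succ_eq_rowSpaceProjOne (n : ℕ) (m : Fin (n - 1)) :
    eqW Net n (m + 1) = rowSpaceProjOne (nbhdMatrix Net n) m := by
  rw [eqW_apply_s19, if_neg (by omega), zero_add]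
  rfl

variable {Net} (h0 : ∀ i, 0 ∉ Net i)
include h0

theorem ne_zero_of_mem_lowerNbhd {j n : ℕ} (hj : j ∈ lowerNbhd Net n) : j ≠ 0 := by
  rintro rfl
  exact h0 n (mem_filter.1 hj).1

theorem eqW_zero {n : ℕ} (hn : n ≠ 0) : eqW Net n 0 = 0 := by
  induction n using Nat.strong_induction_on with
  | _ n ih =>
    rw [eqW_apply_s19, if_neg hn.symm, zero_add]
    refine Fintype.sum_eq_zero _ fun j => ?_
    rw [ih j (lt_of_mem_lowerNbhd Net j.2) (ne_zero_of_mem_lowerNbhd h0 j.2), mul_zero]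

theorem sum_range_eqW_eq_sum_row {n : ℕ} (j : lowerNbhd Net n) (g : ℝ → ℝ) (hg : g 0 = 0) :
    ∑ m ∈ range (j + 1), g (eqW Net j m) = ∑ m, g (nbhdMatrix Net n j m) := by
  have hjn := lt_of_mem_lowerNbhd Net j.2
  calc ∑ m ∈ range (j + 1), g (eqW Net j m) = ∑ m ∈ range n, g (eqW Net j m) := by
        refine sum_subset (range_subset_range.2 hjn) fun m _ hm => ?_
        rw [eqW_eq_zero_of_lt Net (by simpa using hm), hg]
    _ = ∑ m : Fin (n - 1), g (eqW Net j (m + 1)) :=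
        sum_range_eq_sum_fin_pred _ n (by rw [eqW_zero h0 (ne_zero_of_mem_lowerNbhd h0 j.2), hg])

theorem sum_range_eqW {n : ℕ} (g : ℝ → ℝ) (hg : g 0 = 0) :
    ∑ m ∈ range (n + 1), g (eqW Net n m) =
      g 1 + ∑ m, g (rowSpaceProjOne (nbhdMatrix Net n) m) := by
  rw [sum_range_succ, eqW_self, add_comm]
  obtain rfl | hn := eq_or_ne n 0
  · simp
  rw [sum_range_eq_sum_fin_pred _ n (by rw [eqW_zero h0 hn, hg])]
  simp only [eqW_succ_eq_rowSpaceProjOne]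

theorem isUnit_det_nbhdMatrix_mul_transpose (n : ℕ) :
    IsUnit (nbhdMatrix Net n * (nbhdMatrix Net n)ᵀ).det := by
  have hpos (j : lowerNbhd Net n) : 0 < (j : ℕ) :=
    Nat.pos_of_ne_zero (ne_zero_of_mem_lowerNbhd h0 j.2)
  refine isUnit_det_mul_transpose <| vecMul_injective_of_triangular
    (fun j => (⟨j - 1, by have := lt_of_mem_lowerNbhd Net j.2; have := hpos j; omega⟩ :
      Fin (n - 1))) ?_ ?_ ?_
  · intro j k hjk
    have := hpos j
    have := hpos k
    exact Subtype.ext (by simp only [Fin.mk.injEq] at hjk; omega)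
  · intro j
    change eqW Net j (j - 1 + 1) ≠ 0
    rw [Nat.sub_add_cancel (hpos j), eqW_self]
    exact one_ne_zero
  · intro j c hc
    have hc' : (j : ℕ) - 1 < c := hc
    exact eqW_eq_zero_of_lt Net (by omega)

theorem rcount_eq_one_add (n : ℕ) :
    rcount Net n = 1 + rowSpaceProjOne (nbhdMatrix Net n) ⬝ᵥ 1 := by
  rw [rcount, dotProduct_one]
  exact sum_range_eqW h0 id rfl

theorem rcount_eq_sum_sq (n : ℕ) : rcount Net n = ∑ m ∈ range (n + 1), eqW Net n m ^ 2 := by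
  rw [rcount_eq_one_add h0, sum_range_eqW h0 (· ^ 2) (by norm_num), one_pow,
    ← rowSpaceProjOne_dotProduct_self (isUnit_det_nbhdMatrix_mul_transpose h0 n)]
  simp only [dotProduct, sq]

theorem one_le_rcount (n : ℕ) : 1 ≤ rcount Net n := by
  rw [rcount_eq_sum_sq h0]
  simpa [eqW_self] using single_le_sum (fun m _ => sq_nonneg (eqW Net n m)) (self_mem_range_succ n)

theorem nbhdMatrix_dotProduct_one {n : ℕ} (j : lowerNbhd Net n) :
    nbhdMatrix Net n j ⬝ᵥ 1 = rcount Net j := by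
  rw [dotProduct_one, rcount]
  exact (sum_range_eqW_eq_sum_row h0 j id rfl).symm

theorem nbhdMatrix_dotProduct_self {n : ℕ} (j : lowerNbhd Net n) :
    nbhdMatrix Net n j ⬝ᵥ nbhdMatrix Net n j = rcount Net j := by
  rw [rcount_eq_sum_sq h0, sum_range_eqW_eq_sum_row h0 j (· ^ 2) (by norm_num)]
  simp only [dotProduct, sq]

theorem rcount_add_one_le {j n : ℕ} (hj : j ∈ lowerNbhd Net n) :
    rcount Net j + 1 ≤ rcount Net n := by
  have hproj := two_mul_row_dotProduct_one_sub_le (isUnit_det_nbhdMatrix_mul_transpose h0 n) ⟨j, hj⟩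
  rw [nbhdMatrix_dotProduct_one h0, nbhdMatrix_dotProduct_self h0] at hproj
  rw [rcount_eq_one_add h0 n]
  linarith

end Network

section Paths

variable {Net : ℕ → Finset ℕ} {r : ℕ → ℝ} (hr : ∀ i, ∀ j ∈ Net i, r j + 1 ≤ r i)
include hr

theorem add_le_of_path {L : ℕ} {f : ℕ → ℕ} (hf : ∀ s < L, f (s + 1) ∈ Net (f s)) :
    L + r (f L) ≤ r (f 0) := by
  induction L with
  | zero => simp
  | succ L ih =>
    have hprefix := ih fun s hs => hf s (by omega)
    have hlast := hr _ _ (hf L (by omega))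
    push_cast
    linarith

theorem PL_add_one_le (hr1 : ∀ i, 1 ≤ r i) (i : ℕ) : (PL Net i : ℝ) + 1 ≤ r i := by
  set S := {L | ∃ f : ℕ → ℕ, f 0 = i ∧ ∀ s < L, f (s + 1) ∈ Net (f s)}
  have hbound : ∀ L ∈ S, (L : ℝ) + 1 ≤ r i := by
    rintro L ⟨f, rfl, hf⟩
    linarith [add_le_of_path hr hf, hr1 (f L)]
  have hne : S.Nonempty := ⟨0, fun _ => i, rfl, by simp⟩
  have hbdd : BddAbove S := ⟨⌊r i⌋₊, fun L hL => Nat.le_floor (by linarith [hbound L hL])⟩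
  exact hbound _ (Nat.sSup_mem hne hbdd)

end Paths

/-- In any network, if `j ∈ N(i)` then `r_i ≥ r_j + 1`; in
particular signal counts increase by at least one per step along directed paths,
so `r_i ≥ PL(i) + 1`. -/
theorem rcount_increases_along_paths
    (Net : ℕ → Finset ℕ) (hNet : ∀ i, ∀ j ∈ Net i, 1 ≤ j ∧ j < i) :
    (∀ i : ℕ, ∀ j ∈ Net i, rcount Net j + 1 ≤ rcount Net i) ∧
    (∀ i : ℕ, (PL Net i : ℝ) + 1 ≤ rcount Net i) := by
  have h0 : ∀ i, 0 ∉ Net i := fun i hi => absurd (hNet i 0 hi).1 (by norm_num)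
  have hstep : ∀ i, ∀ j ∈ Net i, rcount Net j + 1 ≤ rcount Net i := fun i j hj =>
    rcount_add_one_le h0 (mem_filter.2 ⟨hj, (hNet i j hj).2⟩)
  exact ⟨hstep, PL_add_one_le hstep (one_le_rcount h0)⟩
end
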